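/- arXiv:2211.07055 — 8 statements merged into one kernel-verified Lean document; each statement's English description precedes it below -/
import Mathlib

section
/- Let f ∈ ℂ[x_1,…,x_n] be homogeneous of degree d with border Waring rank at most r. Then the dimension of the complex linear span of the first-order partial derivatives ∂f/∂x_1, …, ∂f/∂x_n is at most r (i.e. the number of essential variables of f is at most r). -/
open MvPolynomial

noncomputable section

/-- All Laurent-series coefficients of `F` lie in `ℂ[[ε]]`, i.e. they have
no terms of negative order. -/
def HasRegularCoeffs {σ : Type*} (F : MvPolynomial σ (LaurentSeries ℂ)) : Prop :=
  ∀ (m : σ →₀ ℕ) (k : ℤ), k < 0 → (F.coeff m).coeff k = 0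

/-- `F` has all coefficients in `ℂ[[ε]]` and `F ≡ f (mod ε)`, i.e. substituting
`ε = 0` into the coefficients of `F` yields `f`. -/
def ApproxTo {σ : Type*} (F : MvPolynomial σ (LaurentSeries ℂ)) (f : MvPolynomial σ ℂ) : Prop :=
  HasRegularCoeffs F ∧ ∀ m : σ →₀ ℕ, (F.coeff m).coeff 0 = f.coeff m

/-- The Waring rank of `f` as a form of degree `d`: the least `r` such that `f` is a
sum of `r` `d`-th powers of homogeneous linear forms over `ℂ`. -/
def waringRank {n : ℕ} (f : MvPolynomial (Fin n) ℂ) (d : ℕ) : ℕ :=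
  sInf {r | ∃ ℓ : Fin r → MvPolynomial (Fin n) ℂ,
    (∀ i, (ℓ i).IsHomogeneous 1) ∧ f = ∑ i, ℓ i ^ d}

/-- The border Waring rank of `f` as a form of degree `d`: the least `r` such that there
are homogeneous linear forms `ℓ₁, …, ℓ_r` with coefficients in `ℂ((ε))` whose sum of
`d`-th powers has all coefficients in `ℂ[[ε]]` and is `≡ f (mod ε)`. -/
def borderWaringRank {n : ℕ} (f : MvPolynomial (Fin n) ℂ) (d : ℕ) : ℕ :=
  sInf {r | ∃ ℓ : Fin r → MvPolynomial (Fin n) (LaurentSeries ℂ),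
    (∀ i, (ℓ i).IsHomogeneous 1) ∧ ApproxTo (∑ i, ℓ i ^ d) f}

open Submodule Set

/-! The partial derivatives `∂ⱼF` of a border decomposition `F = ∑ᵢ ℓᵢᵈ` over `ℂ((ε))` lie in
the `ℂ((ε))`-span of `ℓ₁ᵈ⁻¹, …, ℓ_rᵈ⁻¹`, and `∂ⱼF ≡ ∂ⱼf (mod ε)`. Reduction mod `ε` cannot
raise the rank of a family: a `ℂ((ε))`-linear relation among regular polynomials, rescaled by a
power of `ε` so that all its coefficients are regular and one has nonzero constant term, reduces
to a nontrivial `ℂ`-linear relation among the residues.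

That the border rank is attained at all needs every form of degree `d ≥ 1` to be a sum of `d`-th
powers of linear forms: by polarization, the coefficients of the polynomial
`t ↦ xᵐ (ℓ + t xⱼ)ᵉ` lie in the span of `d`-th powers whenever all its values do. -/

theorem mem_of_forall_sum_pow_smul_mem {K M : Type*} [Field K] [Infinite K] [AddCommGroup M]
    [Module K M] {V : Submodule K M} {e : ℕ} {a : ℕ → M}
    (h : ∀ t : K, ∑ i ∈ Finset.range (e + 1), t ^ i • a i ∈ V) {i : ℕ} (hi : i ≤ e) : a i ∈ V := by
  rw [← Submodule.Quotient.mk_eq_zero, ← Module.forall_dual_apply_eq_zero_iff K]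
  intro φ
  set p : Polynomial K :=
    ∑ j ∈ Finset.range (e + 1), Polynomial.C (φ (V.mkQ (a j))) * Polynomial.X ^ j
  have hp : p = 0 := Polynomial.funext fun t => by
    have := congrArg φ ((Submodule.Quotient.mk_eq_zero V).2 (h t))
    simp only [← mkQ_apply, map_sum, map_smul, smul_eq_mul, map_zero] at this
    simp only [p, Polynomial.eval_finsetSum, Polynomial.eval_mul, Polynomial.eval_C,
      Polynomial.eval_pow, Polynomial.eval_X, Polynomial.eval_zero, ← this, mul_comm]
  simpa [p, Polynomial.finsetSum_coeff, Polynomial.coeff_C_mul_X_pow, Nat.lt_succ_iff.2 hi]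
    using congrArg (Polynomial.coeff · i) hp

section Waring

variable {σ K : Type*} [Field K]

variable (σ K) in
def linearFormPowSpan (d : ℕ) : Submodule K (MvPolynomial σ K) :=
  span K ((· ^ d) '' {ℓ | ℓ.IsHomogeneous 1})

theorem pow_mem_linearFormPowSpan {ℓ : MvPolynomial σ K} (hℓ : ℓ.IsHomogeneous 1) (d : ℕ) :
    ℓ ^ d ∈ linearFormPowSpan σ K d :=
  subset_span ⟨ℓ, hℓ, rfl⟩

theorem monomial_mul_pow_mem_linearFormPowSpan [CharZero K] {d : ℕ} (m : σ →₀ ℕ)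
    (hm : m.degree ≤ d) {ℓ : MvPolynomial σ K} (hℓ : ℓ.IsHomogeneous 1) :
    monomial m 1 * ℓ ^ (d - m.degree) ∈ linearFormPowSpan σ K d := by
  induction m using Finsupp.induction generalizing ℓ with
  | zero => simpa using pow_mem_linearFormPowSpan hℓ d
  | single_add j b m _ hb ih =>
    rw [map_add, Finsupp.degree_single] at hm ⊢
    set e := d - m.degree
    have hexpand : ∀ t : K, monomial m 1 * (ℓ + C t * X j) ^ e =
        ∑ i ∈ Finset.range (e + 1),
          t ^ i • (monomial m 1 * ((e.choose i : K) • (X j ^ i * ℓ ^ (e - i)))) := by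
      intro t
      rw [add_comm, add_pow, Finset.mul_sum]
      refine Finset.sum_congr rfl fun i _ => ?_
      simp only [smul_eq_C_mul, mul_pow, ← map_pow, map_natCast]
      ring
    have hcoeff := mem_of_forall_sum_pow_smul_mem (V := linearFormPowSpan σ K d)
      (fun t => hexpand t ▸ ih (by omega) (hℓ.add ((isHomogeneous_X K j).C_mul t))) (i := b)
      (by omega)
    have hchoose : (e.choose b : K) ≠ 0 := Nat.cast_ne_zero.2 (Nat.choose_pos (by omega)).ne'
    convert (linearFormPowSpan σ K d).smul_mem (e.choose b : K)⁻¹ hcoeff using 1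
    rw [mul_smul_comm, smul_smul, inv_mul_cancel₀ hchoose, one_smul, monomial_single_add,
      show e - b = d - (b + m.degree) by omega]
    ring

theorem mem_linearFormPowSpan_of_isHomogeneous [CharZero K] {d : ℕ} {f : MvPolynomial σ K}
    (hf : f.IsHomogeneous d) : f ∈ linearFormPowSpan σ K d := by
  rw [f.as_sum]
  refine sum_mem fun m hm => ?_
  have hdeg : m.degree = d := by
    rw [Finsupp.degree_eq_weight_one]; exact hf (mem_support_iff.1 hm)
  have hmono := monomial_mul_pow_mem_linearFormPowSpan m hdeg.le (isHomogeneous_zero σ K 1)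
  rw [hdeg, Nat.sub_self, pow_zero, mul_one] at hmono
  simpa [smul_monomial] using (linearFormPowSpan σ K d).smul_mem (coeff m f) hmono

theorem exists_sum_pow_eq_of_isHomogeneous [IsAlgClosed K] [CharZero K] {d : ℕ} (hd : d ≠ 0)
    {f : MvPolynomial σ K} (hf : f.IsHomogeneous d) :
    ∃ (s : ℕ) (ℓ : Fin s → MvPolynomial σ K), (∀ i, (ℓ i).IsHomogeneous 1) ∧ f = ∑ i, ℓ i ^ d := by
  obtain ⟨s, c, g, hg⟩ := mem_span_set'.1 (mem_linearFormPowSpan_of_isHomogeneous hf)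
  choose ℓ hℓ hgℓ using fun i => (g i).2
  choose z hz using fun i => IsAlgClosed.exists_pow_nat_eq (c i) (Nat.pos_of_ne_zero hd)
  refine ⟨s, fun i => C (z i) * ℓ i, fun i => (hℓ i).C_mul _, ?_⟩
  rw [← hg]
  refine Finset.sum_congr rfl fun i _ => ?_
  rw [mul_pow, ← map_pow, hz, ← hgℓ, C_mul']

end Waring

theorem LaurentSeries.coeff_zero_mul_of_regular {R : Type*} [Semiring R] {x y : LaurentSeries R}
    (hx : ∀ k < 0, x.coeff k = 0) (hy : ∀ k < 0, y.coeff k = 0) :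
    (x * y).coeff 0 = x.coeff 0 * y.coeff 0 := by
  rw [HahnSeries.coeff_mul, Finset.sum_eq_single (0, 0)]
  · rintro ⟨i, j⟩ hij hne
    obtain ⟨hi, hj, hsum⟩ := Finset.mem_antidiagonal.1 hij
    have hi0 : 0 ≤ i := not_lt.1 fun h => hi (hx i h)
    have hj0 : 0 ≤ j := not_lt.1 fun h => hj (hy j h)
    exact absurd (Prod.ext_iff.2 ⟨by omega, by omega⟩) hne
  · intro h
    by_contra hne
    exact h (Finset.mem_antidiagonal.2
      ⟨left_ne_zero_of_mul hne, right_ne_zero_of_mul hne, add_zero 0⟩)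

theorem LaurentSeries.coeff_mul_eq_zero_of_regular {R : Type*} [Semiring R]
    {x y : LaurentSeries R} (hx : ∀ k < 0, x.coeff k = 0) (hy : ∀ k < 0, y.coeff k = 0) {k : ℤ}
    (hk : k < 0) : (x * y).coeff k = 0 := by
  rw [HahnSeries.coeff_mul]
  refine Finset.sum_eq_zero fun ⟨i, j⟩ hij => ?_
  have hsum : i + j = k := (Finset.mem_antidiagonal.1 hij).2.2
  rcases lt_or_ge i 0 with hi | hi
  · rw [hx i hi, zero_mul]
  · rw [hy j (by omega), mul_zero]

theorem LaurentSeries.exists_regular_mul {ι R : Type*} [Finite ι] [Semiring R]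
    (c : ι → LaurentSeries R) (hc : ∃ k, c k ≠ 0) :
    ∃ u : LaurentSeries R, (∀ k, ∀ j < 0, (u * c k).coeff j = 0) ∧ ∃ k, (u * c k).coeff 0 ≠ 0 := by
  classical
  have := Fintype.ofFinite ι
  obtain ⟨k₀, hk₀, hmin⟩ := (Finset.univ.filter (c · ≠ 0)).exists_min_image (fun k => (c k).order)
    (Finset.filter_nonempty_iff.2 (by simpa using hc))
  have hshift : ∀ k j, (HahnSeries.single (-(c k₀).order) 1 * c k).coeff j =
      (c k).coeff (j + (c k₀).order) := by
    intro k j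
    simpa using HahnSeries.coeff_single_mul_add (r := (1 : R)) (x := c k)
      (a := j + (c k₀).order) (b := -(c k₀).order)
  refine ⟨HahnSeries.single (-(c k₀).order) 1, fun k j hj => ?_, k₀, ?_⟩
  · rw [hshift]
    by_cases hk : c k = 0
    · simp [hk]
    · exact HahnSeries.coeff_eq_zero_of_lt_order
        (by linarith [hmin k (by simpa using hk)])
  · rw [hshift, zero_add]
    exact HahnSeries.coeff_order_eq_zero.not.2 (by simpa using hk₀)

namespace ApproxTo

variable {σ : Type*} {F : MvPolynomial σ (LaurentSeries ℂ)} {f : MvPolynomial σ ℂ}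

theorem eq_zero (h : ApproxTo 0 f) : f = 0 := by
  ext m
  simpa using (h.2 m).symm

theorem sum {ι : Type*} (s : Finset ι) {G : ι → MvPolynomial σ (LaurentSeries ℂ)}
    {g : ι → MvPolynomial σ ℂ} (h : ∀ i ∈ s, ApproxTo (G i) (g i)) :
    ApproxTo (∑ i ∈ s, G i) (∑ i ∈ s, g i) := by
  refine ⟨fun m k hk => ?_, fun m => ?_⟩
  · simp only [coeff_sum, HahnSeries.coeff_sum]
    exact Finset.sum_eq_zero fun i hi => (h i hi).1 m k hk
  · simp only [coeff_sum, HahnSeries.coeff_sum]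
    exact Finset.sum_congr rfl fun i hi => (h i hi).2 m

theorem smul (h : ApproxTo F f) {u : LaurentSeries ℂ} (hu : ∀ k < 0, u.coeff k = 0) :
    ApproxTo (u • F) (u.coeff 0 • f) := by
  refine ⟨fun m k hk => ?_, fun m => ?_⟩
  · rw [coeff_smul, smul_eq_mul]
    exact LaurentSeries.coeff_mul_eq_zero_of_regular hu (h.1 m) hk
  · rw [coeff_smul, smul_eq_mul, LaurentSeries.coeff_zero_mul_of_regular hu (h.1 m), h.2,
      coeff_smul, smul_eq_mul]

theorem pderiv (h : ApproxTo F f) (i : σ) :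
    ApproxTo (MvPolynomial.pderiv i F) (MvPolynomial.pderiv i f) := by
  have hcoeff : ∀ m k, ((MvPolynomial.pderiv i F).coeff m).coeff k =
      (m i + 1) • (F.coeff (m + Finsupp.single i 1)).coeff k := by
    intro m k
    rw [coeff_pderiv, mul_comm, ← Nat.cast_succ, ← nsmul_eq_mul, HahnSeries.coeff_smul]
  refine ⟨fun m k hk => by rw [hcoeff, h.1 _ _ hk, smul_zero], fun m => ?_⟩
  rw [hcoeff, h.2, coeff_pderiv, nsmul_eq_mul]
  push_cast
  ring

end ApproxTo

theorem approxTo_map_algebraMap {σ : Type*} (f : MvPolynomial σ ℂ) :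
    ApproxTo (map (algebraMap ℂ (LaurentSeries ℂ)) f) f := by
  refine ⟨fun m k hk => ?_, fun m => ?_⟩
  · rw [coeff_map, LaurentSeries.algebraMap_apply, HahnSeries.C_apply,
      HahnSeries.coeff_single_of_ne hk.ne]
  · rw [coeff_map, LaurentSeries.algebraMap_apply, HahnSeries.C_apply,
      HahnSeries.coeff_single_same]

theorem linearIndependent_of_approxTo {ι σ : Type*} [Finite ι]
    {W : ι → MvPolynomial σ (LaurentSeries ℂ)} {w : ι → MvPolynomial σ ℂ}
    (hW : ∀ k, ApproxTo (W k) (w k)) (hw : LinearIndependent ℂ w) :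
    LinearIndependent (LaurentSeries ℂ) W := by
  have := Fintype.ofFinite ι
  rw [Fintype.linearIndependent_iff] at hw
  refine (Fintype.linearIndependent_iff (R := LaurentSeries ℂ) (v := W)).2 fun c hc => ?_
  by_contra! hne
  obtain ⟨u, hu, k, hk⟩ := LaurentSeries.exists_regular_mul c hne
  have hrel : ∑ k, (u * c k) • W k = 0 := by
    simp_rw [mul_smul, ← Finset.smul_sum, hc, smul_zero]
  have hres := ApproxTo.sum Finset.univ fun k _ => (hW k).smul (hu k)
  rw [hrel] at hres
  exact hk (hw _ hres.eq_zero k)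

theorem finrank_span_le_of_approxTo {ι σ : Type*} [Finite ι]
    {W : ι → MvPolynomial σ (LaurentSeries ℂ)} {w : ι → MvPolynomial σ ℂ}
    (hW : ∀ k, ApproxTo (W k) (w k)) :
    Module.finrank ℂ (span ℂ (range w)) ≤
      Module.finrank (LaurentSeries ℂ) (span (LaurentSeries ℂ) (range W)) := by
  obtain ⟨κ, a, ha, hspan, hind⟩ := exists_linearIndependent' ℂ w
  have := Finite.of_injective a ha
  have := Fintype.ofFinite κ
  have := FiniteDimensional.span_of_finite (LaurentSeries ℂ) (finite_range W)
  calc Module.finrank ℂ (span ℂ (range w)) = Fintype.card κ := by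
        rw [← hspan, finrank_span_eq_card hind]
    _ = Module.finrank (LaurentSeries ℂ) (span (LaurentSeries ℂ) (range (W ∘ a))) :=
        (finrank_span_eq_card (linearIndependent_of_approxTo (fun k => hW (a k)) hind)).symm
    _ ≤ _ := Submodule.finrank_mono (span_mono (range_comp_subset_range a W))

theorem pderiv_pow_mem_span_pow_pred {R σ : Type*} [CommRing R] {ℓ : MvPolynomial σ R}
    (hℓ : ℓ.IsHomogeneous 1) (d : ℕ) (i : σ) :
    pderiv i (ℓ ^ d) ∈ span R {ℓ ^ (d - 1)} := by
  obtain ⟨c, hc⟩ : ∃ c, pderiv i ℓ = C c :=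
    ⟨_, totalDegree_eq_zero_iff_eq_C.1 ((totalDegree_zero_iff_isHomogeneous σ).2 hℓ.pderiv)⟩
  rw [pderiv_pow, hc, mem_span_singleton]
  exact ⟨d * c, by rw [smul_eq_C_mul, map_mul, map_natCast]; ring⟩

theorem finrank_span_pderiv_le_of_approxTo {σ : Type*} [Finite σ] {s d : ℕ}
    {ℓ : Fin s → MvPolynomial σ (LaurentSeries ℂ)} (hℓ : ∀ k, (ℓ k).IsHomogeneous 1)
    {f : MvPolynomial σ ℂ} (hF : ApproxTo (∑ k, ℓ k ^ d) f) :
    Module.finrank ℂ (span ℂ (range fun i => pderiv i f)) ≤ s := by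
  have := FiniteDimensional.span_of_finite (LaurentSeries ℂ) (finite_range fun k => ℓ k ^ (d - 1))
  have hpderiv :
      ∀ i, pderiv i (∑ k, ℓ k ^ d) ∈ span (LaurentSeries ℂ) (range fun k => ℓ k ^ (d - 1)) := by
    intro i
    rw [map_sum]
    exact sum_mem fun k _ => span_mono (singleton_subset_iff.2 (mem_range_self k))
      (pderiv_pow_mem_span_pow_pred (hℓ k) d i)
  calc Module.finrank ℂ (span ℂ (range fun i => pderiv i f))
      ≤ Module.finrank (LaurentSeries ℂ)
          (span (LaurentSeries ℂ) (range fun i => pderiv i (∑ k, ℓ k ^ d))) :=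
        finrank_span_le_of_approxTo fun i => hF.pderiv i
    _ ≤ Module.finrank (LaurentSeries ℂ) (span (LaurentSeries ℂ) (range fun k => ℓ k ^ (d - 1))) :=
        Submodule.finrank_mono (span_le.2 (range_subset_iff.2 hpderiv))
    _ ≤ s := (finrank_range_le_card _).trans_eq (Fintype.card_fin s)

theorem exists_approxTo_of_borderWaringRank {n d : ℕ} {f : MvPolynomial (Fin n) ℂ}
    (hf : f.IsHomogeneous d) (hd : d ≠ 0) :
    ∃ ℓ : Fin (borderWaringRank f d) → MvPolynomial (Fin n) (LaurentSeries ℂ),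
      (∀ i, (ℓ i).IsHomogeneous 1) ∧ ApproxTo (∑ i, ℓ i ^ d) f := by
  obtain ⟨s, ℓ, hℓ, hfℓ⟩ := exists_sum_pow_eq_of_isHomogeneous hd hf
  refine Nat.sInf_mem (s := {r | ∃ ℓ : Fin r → MvPolynomial (Fin n) (LaurentSeries ℂ),
    (∀ i, (ℓ i).IsHomogeneous 1) ∧ ApproxTo (∑ i, ℓ i ^ d) f})
    ⟨s, fun i => map (algebraMap ℂ _) (ℓ i), fun i => (hℓ i).map _, ?_⟩
  simpa [hfℓ, map_sum, map_pow] using approxTo_map_algebraMap f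

/-- A homogeneous polynomial of degree `d` with border Waring rank at most `r` has at
most `r` essential variables, i.e. the span of its first-order partial derivatives
has dimension at most `r`. -/
theorem statement2 {n d r : ℕ} (f : MvPolynomial (Fin n) ℂ) (hf : f.IsHomogeneous d)
    (hbr : borderWaringRank f d ≤ r) :
    Module.finrank ℂ ↥(Submodule.span ℂ (Set.range fun i : Fin n => pderiv i f)) ≤ r := by
  rcases eq_or_ne d 0 with rfl | hd
  · -- `f` is constant, and its border rank may be the junk value `sInf ∅ = 0`.
    rw [← totalDegree_zero_iff_isHomogeneous, totalDegree_eq_zero_iff_eq_C] at hf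
    have hbot : span ℂ (range fun i : Fin n => pderiv i f) = ⊥ :=
      span_eq_bot.2 (by rintro _ ⟨i, rfl⟩; rw [hf]; exact pderiv_C)
    rw [hbot, finrank_bot]
    exact r.zero_le
  · obtain ⟨ℓ, hℓ, hF⟩ := exists_approxTo_of_borderWaringRank hf hd
    exact (finrank_span_pderiv_le_of_approxTo hℓ hF).trans hbr
end
end

section
/- Let ℓ_1, …, ℓ_m ∈ ℂ[x_1,…,x_n] be nonzero homogeneous linear forms such that ℓ_i is not a scalar multiple of ℓ_j whenever i ≠ j, and let g_1, …, g_m be homogeneous polynomials of degrees r_1 − 1, …, r_m − 1 respectively (r_k ≥ 1). If ∑_{k=1}^m ℓ_k^{d − r_k + 1} g_k = 0 and d ≥ (∑_{k=1}^m r_k) − 1, then g_k = 0 for every k. -/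
/-!
Induction on the number of forms. Write `t_k = r_k - 1` for the degree of `g_k` and
`e_k = d + 1 - r_k`; what the induction preserves is `e_k ≥ ∑_{j ≠ k} (t_j + 1)`.
Pick a direction `v` with `ℓ_a(v) = 0` and `ℓ_k(v) ≠ 0` for `k ≠ a` (a vector space over an
infinite field is not a finite union of proper subspaces). The directional derivative
`∂_v ^ (t_a + 1)` kills `ℓ_a ^ e_a * g_a`, because `∂_v ℓ_a = 0` and `deg g_a = t_a`, and turns
`ℓ_k ^ e_k * g_k` into `ℓ_k ^ (e_k - t_a - 1) * G_k` with `G_k` of degree `t_k`. Each step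
`g ↦ m c g + ℓ ∂_v g` (`c = ∂_v ℓ ≠ 0`) producing `G_k` is injective: applied to the last
nonvanishing power `∂_v ^ j g` it gives `(m + j) c ∂_v ^ j g = 0`. So the `G_k`, hence the `g_k`,
vanish by induction, and then `ℓ_a ^ e_a * g_a = 0` forces `g_a = 0`.
-/

open MvPolynomial

noncomputable section

namespace Derivation

variable {R A : Type*} [CommSemiring R] [CommRing A] [Algebra R A] (D : Derivation R A A)

/-- The cofactor of `ℓ ^ e` in `D ^ s (ℓ ^ (e + s) * g)`, see `pow_apply_pow_add_mul`. -/
def powMulCofactor (ℓ : A) (e : ℕ) : ℕ → A → A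
  | 0, g => g
  | s + 1, g => powMulCofactor ℓ e s ((e + s + 1) • D ℓ * g + ℓ * D g)

theorem apply_pow_succ_mul (ℓ g : A) (m : ℕ) :
    D (ℓ ^ (m + 1) * g) = ℓ ^ m * ((m + 1) • D ℓ * g + ℓ * D g) := by
  rw [leibniz, leibniz_pow, Nat.add_sub_cancel]
  simp only [smul_eq_mul, nsmul_eq_mul]
  ring

theorem pow_apply_pow_add_mul (ℓ : A) (e s : ℕ) (g : A) :
    ((D : Module.End R A) ^ s) (ℓ ^ (e + s) * g) = ℓ ^ e * D.powMulCofactor ℓ e s g := by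
  induction s generalizing g with
  | zero => rfl
  | succ s ih =>
    rw [pow_succ, Module.End.mul_apply, ← add_assoc, coeFn_coe, apply_pow_succ_mul, ih]
    rfl

theorem pow_apply_pow_mul_of_apply_eq_zero {ℓ : A} (hℓ : D ℓ = 0) (e s : ℕ) (g : A) :
    ((D : Module.End R A) ^ s) (ℓ ^ e * g) = ℓ ^ e * ((D : Module.End R A) ^ s) g := by
  induction s with
  | zero => rfl
  | succ s ih =>
    rw [pow_succ', Module.End.mul_apply, ih, Module.End.mul_apply, coeFn_coe, leibniz,
      leibniz_pow, hℓ]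
    simp

theorem pow_apply_nsmul_mul_add_mul {ℓ : A} (hℓ : D (D ℓ) = 0) (m k : ℕ) (g : A) :
    ((D : Module.End R A) ^ k) (m • D ℓ * g + ℓ * D g) =
      (m + k) • D ℓ * ((D : Module.End R A) ^ k) g + ℓ * ((D : Module.End R A) ^ (k + 1)) g := by
  induction k with
  | zero => simp
  | succ k ih =>
    rw [pow_succ' _ k, Module.End.mul_apply, ih]
    simp only [pow_succ', Module.End.mul_apply, coeFn_coe, map_add, leibniz, hℓ, map_natCast,
      smul_eq_mul, nsmul_eq_mul]
    push_cast
    ring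

theorem eq_zero_of_nsmul_mul_add_mul_eq_zero [IsDomain A] [CharZero A] {ℓ : A}
    (hℓ : D (D ℓ) = 0) (hℓ₀ : D ℓ ≠ 0) {m N : ℕ} {g : A}
    (hN : ((D : Module.End R A) ^ N) g = 0) (h : (m + 1) • D ℓ * g + ℓ * D g = 0) : g = 0 := by
  classical
  by_contra hg
  have hex : ∃ N, ((D : Module.End R A) ^ N) g = 0 := ⟨N, hN⟩
  obtain ⟨k, hk⟩ : ∃ k, Nat.find hex = k + 1 :=
    Nat.exists_eq_add_one.mpr <| Nat.pos_of_ne_zero fun h0 => hg <| by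
      simpa [h0] using Nat.find_spec hex
  have hk₀ : ((D : Module.End R A) ^ k) g ≠ 0 := Nat.find_min hex (by omega)
  have hk₁ : ((D : Module.End R A) ^ (k + 1)) g = 0 := hk ▸ Nat.find_spec hex
  have := D.pow_apply_nsmul_mul_add_mul hℓ (m + 1) k g
  rw [h, map_zero, hk₁, mul_zero, add_zero, eq_comm, mul_eq_zero, nsmul_eq_mul] at this
  exact this.elim (mul_ne_zero (Nat.cast_ne_zero.mpr (by omega)) hℓ₀) hk₀

end Derivation

theorem Module.Dual.eq_smul_of_ker_le_ker {K V : Type*} [Field K] [AddCommGroup V] [Module K V]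
    {φ ψ : Module.Dual K V} (h : LinearMap.ker φ ≤ LinearMap.ker ψ) : ∃ c : K, ψ = c • φ := by
  have := mem_span_of_iInf_ker_le_ker (L := fun _ : Unit => φ) (by simpa using h)
  rw [Set.range_const, Submodule.mem_span_singleton] at this
  exact this.imp fun c hc => hc.symm

theorem Module.Dual.exists_apply_eq_zero_forall_apply_ne_zero {K V ι : Type*} [Field K]
    [Infinite K] [AddCommGroup V] [Module K V] (φ : Module.Dual K V) (s : Finset ι)
    (ψ : ι → Module.Dual K V) (h : ∀ i ∈ s, ∀ c : K, ψ i ≠ c • φ) :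
    ∃ v, φ v = 0 ∧ ∀ i ∈ s, ψ i v ≠ 0 := by
  let p (i : s) : Submodule K (LinearMap.ker φ) :=
    (LinearMap.ker (ψ i)).comap (LinearMap.ker φ).subtype
  have hp (i : s) : p i ≠ ⊤ := by
    intro htop
    obtain ⟨c, hc⟩ := eq_smul_of_ker_le_ker (φ := φ) (ψ := ψ i) fun x hx => by
      simpa [p] using (Submodule.eq_top_iff'.mp htop) ⟨x, hx⟩
    exact h i i.2 c hc
  obtain ⟨⟨v, hv⟩, hvp⟩ := Set.ne_univ_iff_exists_notMem _ |>.mp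
    (Submodule.iUnion_ssubset_of_forall_ne_top_of_card_lt Finset.univ p hp
      (by simp [ENat.card_eq_top_of_infinite])).ne
  refine ⟨v, hv, fun i hi hvi => hvp ?_⟩
  simp only [Finset.mem_univ, Set.iUnion_true, Set.mem_iUnion]
  exact ⟨⟨i, hi⟩, hvi⟩

namespace MvPolynomial

theorem IsHomogeneous.eq_C_of_zero {R σ : Type*} [CommSemiring R] {f : MvPolynomial σ R}
    (h : f.IsHomogeneous 0) : f = C (coeff 0 f) :=
  totalDegree_eq_zero_iff_eq_C.mp ((totalDegree_zero_iff_isHomogeneous _).mpr h)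

theorem IsHomogeneous.pderiv_eq_C {R σ : Type*} [CommSemiring R] {ℓ : MvPolynomial σ R}
    (h : ℓ.IsHomogeneous 1) (i : σ) : pderiv i ℓ = C (coeff 0 (pderiv i ℓ)) :=
  IsHomogeneous.eq_C_of_zero h.pderiv

variable {K σ : Type*} [Field K] [Fintype σ]

def dirDeriv (v : σ → K) : Derivation K (MvPolynomial σ K) (MvPolynomial σ K) :=
  ∑ i, v i • pderiv i

/-- The differential of `f` at the origin; for a linear form this is the form itself, as a
functional on `σ → K`. -/
def linearPart (f : MvPolynomial σ K) : Module.Dual K (σ → K) :=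
  Fintype.linearCombination K fun i => coeff 0 (pderiv i f)

theorem dirDeriv_apply (v : σ → K) (f : MvPolynomial σ K) :
    dirDeriv v f = ∑ i, v i • pderiv i f := by
  rw [dirDeriv, ← Derivation.coeFnAddMonoidHom_apply, map_sum, Finset.sum_apply]
  rfl

theorem linearPart_apply (f : MvPolynomial σ K) (v : σ → K) :
    linearPart f v = ∑ i, v i * coeff 0 (pderiv i f) := by
  simp [linearPart, Fintype.linearCombination_apply]

theorem dirDeriv_C (v : σ → K) (a : K) : dirDeriv v (C a) = 0 := by
  rw [← algebraMap_eq, Derivation.map_algebraMap]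

protected theorem IsHomogeneous.dirDeriv {f : MvPolynomial σ K} {n : ℕ} (h : f.IsHomogeneous n)
    (v : σ → K) : (dirDeriv v f).IsHomogeneous (n - 1) := by
  rw [dirDeriv_apply]
  exact IsHomogeneous.sum _ _ _ fun i _ => by
    rw [smul_eq_C_mul]
    exact h.pderiv.C_mul _

theorem IsHomogeneous.dirDeriv_pow_eq_zero {f : MvPolynomial σ K} {n : ℕ}
    (h : f.IsHomogeneous n) (v : σ → K) : ((dirDeriv v : Module.End K _) ^ (n + 1)) f = 0 := by
  induction n generalizing f with
  | zero => rw [zero_add, pow_one, Derivation.coeFn_coe, h.eq_C_of_zero, dirDeriv_C]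
  | succ n ih => rw [pow_succ, Module.End.mul_apply, Derivation.coeFn_coe, ih (h.dirDeriv v)]

theorem IsHomogeneous.dirDeriv_eq_C {ℓ : MvPolynomial σ K} (h : ℓ.IsHomogeneous 1)
    (v : σ → K) : dirDeriv v ℓ = C (linearPart ℓ v) := by
  rw [dirDeriv_apply, linearPart_apply, map_sum]
  refine Finset.sum_congr rfl fun i _ => ?_
  rw [h.pderiv_eq_C i, smul_eq_C_mul, ← MvPolynomial.C_mul, coeff_zero_C]

theorem IsHomogeneous.eq_sum_linearPart_smul_X [DecidableEq σ] {ℓ : MvPolynomial σ K}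
    (h : ℓ.IsHomogeneous 1) :
    ℓ = ∑ i, linearPart ℓ (Pi.single i 1) • X i := by
  conv_lhs => rw [← one_smul ℕ ℓ, ← h.sum_X_mul_pderiv]
  refine Finset.sum_congr rfl fun i _ => ?_
  rw [h.pderiv_eq_C i, linearPart_apply, smul_eq_C_mul, mul_comm]
  simp [Pi.single_apply]

theorem IsHomogeneous.eq_smul_of_linearPart_eq_smul {ℓ ℓ' : MvPolynomial σ K}
    (h : ℓ.IsHomogeneous 1) (h' : ℓ'.IsHomogeneous 1) {c : K}
    (hc : linearPart ℓ = c • linearPart ℓ') : ℓ = c • ℓ' := by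
  classical
  rw [h.eq_sum_linearPart_smul_X, h'.eq_sum_linearPart_smul_X, hc, Finset.smul_sum]
  simp [smul_smul]

theorem IsHomogeneous.nsmul_dirDeriv_mul_add_mul {ℓ g : MvPolynomial σ K} {t : ℕ}
    (hℓ : ℓ.IsHomogeneous 1) (hg : g.IsHomogeneous t) (v : σ → K) (m : ℕ) :
    (m • dirDeriv v ℓ * g + ℓ * dirDeriv v g).IsHomogeneous t := by
  refine IsHomogeneous.add ?_ ?_
  · rw [hℓ.dirDeriv_eq_C, ← map_nsmul]
    exact hg.C_mul _
  · cases t with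
    | zero =>
      rw [hg.eq_C_of_zero, dirDeriv_C, mul_zero]
      exact isHomogeneous_zero _ _ _
    | succ t => simpa [add_comm] using hℓ.mul (hg.dirDeriv v)

theorem IsHomogeneous.powMulCofactor {ℓ g : MvPolynomial σ K} {t : ℕ}
    (hℓ : ℓ.IsHomogeneous 1) (hg : g.IsHomogeneous t) (v : σ → K) (e s : ℕ) :
    ((dirDeriv v).powMulCofactor ℓ e s g).IsHomogeneous t := by
  induction s generalizing g with
  | zero => exact hg
  | succ s ih => exact ih (hℓ.nsmul_dirDeriv_mul_add_mul hg v _)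

theorem eq_zero_of_powMulCofactor_eq_zero [CharZero K] {ℓ g : MvPolynomial σ K} {t : ℕ}
    {v : σ → K} (hℓ : ℓ.IsHomogeneous 1) (hv : linearPart ℓ v ≠ 0) (hg : g.IsHomogeneous t)
    {e s : ℕ} (h : (dirDeriv v).powMulCofactor ℓ e s g = 0) : g = 0 := by
  induction s generalizing g with
  | zero => exact h
  | succ s ih =>
    refine (dirDeriv v).eq_zero_of_nsmul_mul_add_mul_eq_zero ?_ ?_ (hg.dirDeriv_pow_eq_zero v)
      (ih (hℓ.nsmul_dirDeriv_mul_add_mul hg v _) h)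
    · rw [hℓ.dirDeriv_eq_C, dirDeriv_C]
    · rwa [hℓ.dirDeriv_eq_C, Ne, C_eq_zero]

theorem eq_zero_of_sum_pow_mul_eq_zero [CharZero K] {ι : Type*} [DecidableEq ι]
    (ℓ : ι → MvPolynomial σ K) (e t : ι → ℕ) (g : ι → MvPolynomial σ K)
    (hℓ : ∀ i, (ℓ i).IsHomogeneous 1) (hne : ∀ i, ℓ i ≠ 0) (hprop : ∀ i j, i ≠ j → ∀ c : K, ℓ i ≠ c • ℓ j)
    (hg : ∀ i, (g i).IsHomogeneous (t i)) (s : Finset ι)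
    (he : ∀ i ∈ s, ∑ j ∈ s.erase i, (t j + 1) ≤ e i)
    (hsum : ∑ i ∈ s, ℓ i ^ e i * g i = 0) : ∀ i ∈ s, g i = 0 := by
  induction s using Finset.induction_on generalizing e g with
  | empty => simp
  | insert a s ha ih =>
    obtain ⟨v, hva, hv⟩ := (linearPart (ℓ a)).exists_apply_eq_zero_forall_apply_ne_zero s
      (fun k => linearPart (ℓ k)) fun k hk c hc =>
        hprop k a (ne_of_mem_of_not_mem hk ha) c
          ((hℓ k).eq_smul_of_linearPart_eq_smul (hℓ a) hc)
    set D := dirDeriv (K := K) v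
    set N := t a + 1
    have he' : ∀ k ∈ s, ∑ j ∈ s.erase k, (t j + 1) + N ≤ e k := by
      intro k hk
      have := he k (Finset.mem_insert_of_mem hk)
      rwa [Finset.erase_insert_of_ne (ne_of_mem_of_not_mem hk ha).symm,
        Finset.sum_insert fun h => ha (Finset.mem_of_mem_erase h), add_comm] at this
    have hDsum : ∑ k ∈ s, ℓ k ^ (e k - N) * D.powMulCofactor (ℓ k) (e k - N) N (g k) = 0 := by
      have := congrArg ((D : Module.End K _) ^ N) hsum
      rw [map_sum, map_zero, Finset.sum_insert ha, D.pow_apply_pow_mul_of_apply_eq_zero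
        (by rw [(hℓ a).dirDeriv_eq_C, hva, C_0]), (hg a).dirDeriv_pow_eq_zero, mul_zero,
        zero_add] at this
      rw [← this]
      refine Finset.sum_congr rfl fun k hk => ?_
      rw [← D.pow_apply_pow_add_mul, Nat.sub_add_cancel (by have := he' k hk; omega)]
    have hs : ∀ k ∈ s, g k = 0 := fun k hk =>
      eq_zero_of_powMulCofactor_eq_zero (hℓ k) (hv k hk) (hg k)
        (ih (fun k => e k - N) _ (fun k => (hℓ k).powMulCofactor (hg k) v _ _)
          (fun k hk => by have := he' k hk; omega) hDsum k hk)
    have ha' : ℓ a ^ e a * g a = 0 := by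
      rwa [Finset.sum_insert ha, Finset.sum_eq_zero fun k hk => by rw [hs k hk, mul_zero],
        add_zero] at hsum
    intro i hi
    rcases Finset.mem_insert.mp hi with rfl | hi
    · exact (mul_eq_zero.mp ha').resolve_left (pow_ne_zero _ (hne i))
    · exact hs i hi

end MvPolynomial

/-- Jordan's lemma: if `ℓ₁, …, ℓ_m` are pairwise non-proportional nonzero homogeneous
linear forms, `g_k` is homogeneous of degree `r_k - 1`, `∑ ℓ_k^(d - r_k + 1) g_k = 0`
and `d ≥ (∑ r_k) - 1`, then all `g_k = 0`. -/
theorem statement3 {n d m : ℕ} (ℓ : Fin m → MvPolynomial (Fin n) ℂ)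
    (r : Fin m → ℕ) (g : Fin m → MvPolynomial (Fin n) ℂ)
    (hhom : ∀ i, (ℓ i).IsHomogeneous 1) (hne : ∀ i, ℓ i ≠ 0)
    (hprop : ∀ i j, i ≠ j → ∀ c : ℂ, ℓ i ≠ c • ℓ j)
    (hr : ∀ i, 1 ≤ r i)
    (hg : ∀ i, (g i).IsHomogeneous (r i - 1))
    (hsum : ∑ i, ℓ i ^ (d + 1 - r i) * g i = 0)
    (hd : ∑ i, r i ≤ d + 1) :
    ∀ i, g i = 0 := by
  intro i
  refine eq_zero_of_sum_pow_mul_eq_zero ℓ (fun i => d + 1 - r i) (fun i => r i - 1) g hhom hne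
    hprop hg Finset.univ (fun i _ => ?_) hsum i (Finset.mem_univ i)
  have hsplit := Finset.add_sum_erase Finset.univ r (Finset.mem_univ i)
  have hpred : ∑ j ∈ Finset.univ.erase i, (r j - 1 + 1) = ∑ j ∈ Finset.univ.erase i, r j :=
    Finset.sum_congr rfl fun j _ => Nat.sub_add_cancel (hr j)
  omega
end
end

section
/- Let f ∈ ℂ[x_1,…,x_n] be a nonzero homogeneous polynomial of degree d ≥ 1 and suppose f = α(∏_{i=1}^m (1 + ℓ_i) − 1) for some α ∈ ℂ and nonzero homogeneous linear forms ℓ_1, …, ℓ_m ∈ ℂ[x_1,…,x_n]. Then m = d, all the ℓ_i are pairwise proportional, and f is a scalar multiple of ℓ_1^d (in particular, f is a d-th power of a homogeneous linear form up to a scalar). -/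
/-!
Substituting `x ↦ t • x` turns the identity into `α (∏ (1 + ℓᵢ t) - 1) = f tᵈ`, an identity of
polynomials in `t` over the domain `ℂ[x]`. Comparing degrees in `t` gives `m = d`, and evaluating
at the root `t = -1/ℓᵢ` (in the fraction field) gives `f = (-1)ᵈ⁺¹ α ℓᵢᵈ` for every `i`. Hence all
the `ℓᵢᵈ` coincide, so each quotient `ℓᵢ/ℓⱼ` is a `d`-th root of unity, which lies in `ℂ`.
-/


open MvPolynomial

noncomputable section

namespace MvPolynomial

variable {σ R : Type*} [CommSemiring R]

/-- `p ↦ p(t • x)`, where `t` is the variable of the univariate polynomial ring. -/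
def dilation : MvPolynomial σ R →ₐ[R] Polynomial (MvPolynomial σ R) :=
  aeval fun j ↦ Polynomial.C (X j) * Polynomial.X

theorem dilation_monomial (s : σ →₀ ℕ) (r : R) :
    dilation (monomial s r) = Polynomial.C (monomial s r) * Polynomial.X ^ s.degree := by
  rw [monomial_eq, Finsupp.degree_apply]
  simp only [dilation, map_mul, aeval_C, Polynomial.algebraMap_apply, algebraMap_eq,
    Finsupp.prod, map_prod, map_pow, aeval_X, mul_pow, Finset.prod_mul_distrib,
    Finset.prod_pow_eq_pow_sum, mul_assoc]

theorem IsHomogeneous.dilation_eq {p : MvPolynomial σ R} {k : ℕ} (hp : p.IsHomogeneous k) :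
    dilation p = Polynomial.C p * Polynomial.X ^ k := by
  conv_lhs => rw [p.as_sum]
  conv_rhs => rw [p.as_sum, map_sum, Finset.sum_mul]
  rw [map_sum]
  refine Finset.sum_congr rfl fun s hs ↦ ?_
  rw [dilation_monomial, Finsupp.degree_apply, ← hp.degree_eq_sum_deg_support hs]

end MvPolynomial

namespace Polynomial

variable {R ι : Type*} [CommRing R] [IsDomain R] [Fintype ι] {a : ι → R} {b c : R} {d : ℕ}

theorem card_eq_of_C_mul_prod_one_add_sub_one_eq (ha : ∀ i, a i ≠ 0) (hb : b ≠ 0)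
    (h : C c * (∏ i, (1 + C (a i) * X) - 1) = C b * X ^ d) : Fintype.card ι = d := by
  have hc : c ≠ 0 := by
    rintro rfl
    simp [hb] at h
  have hlin : ∀ i, (1 + C (a i) * X).natDegree = 1 := fun i ↦ by
    rw [add_comm, ← C_1, natDegree_linear (ha i)]
  have hprod : (∏ i, (1 + C (a i) * X)).natDegree = Fintype.card ι := by
    rw [natDegree_prod _ _ fun i _ ↦ ne_zero_of_natDegree_gt (hlin i ▸ one_pos (α := ℕ))]
    simp [hlin]
  calc Fintype.card ι = (∏ i, (1 + C (a i) * X) - C 1).natDegree := by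
        rw [natDegree_sub_C, hprod]
    _ = (C c * (∏ i, (1 + C (a i) * X) - 1)).natDegree := by rw [map_one, natDegree_C_mul hc]
    _ = d := by rw [h, natDegree_C_mul_X_pow _ _ hb]

theorem eq_mul_pow_of_C_mul_prod_one_add_sub_one_eq {i : ι} (ha : a i ≠ 0)
    (h : C c * (∏ i, (1 + C (a i) * X) - 1) = C b * X ^ d) :
    b = (-1) ^ (d + 1) * c * a i ^ d := by
  let φ := algebraMap R (FractionRing R)
  have hφa : φ (a i) ≠ 0 := (map_ne_zero_iff φ (IsFractionRing.injective R _)).mpr ha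
  have hroot := congrArg (aeval (-(φ (a i))⁻¹)) h
  have hvanish : ∏ j, (1 + φ (a j) * -(φ (a i))⁻¹) = 0 :=
    Finset.prod_eq_zero (Finset.mem_univ i) (by field_simp; ring)
  simp only [map_mul, map_sub, map_prod, map_add, map_one, map_pow, aeval_C, aeval_X] at hroot
  rw [hvanish, zero_sub, mul_neg_one, neg_inv, inv_pow] at hroot
  rw [eq_mul_inv_iff_mul_eq₀ (pow_ne_zero _ (neg_ne_zero.mpr hφa)), neg_pow] at hroot
  apply IsFractionRing.injective R (FractionRing R)
  simp only [map_mul, map_pow, map_neg, map_one]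
  linear_combination -hroot

end Polynomial

theorem exists_smul_eq_of_pow_eq {R : Type*} [CommRing R] [IsDomain R] [Algebra ℂ R] {d : ℕ}
    (hd : d ≠ 0) {a b : R} (h : a ^ d = b ^ d) : ∃ c : ℂ, a = c • b := by
  rcases eq_or_ne b 0 with rfl | hb
  · exact ⟨0, by simpa [zero_pow hd, pow_eq_zero_iff hd] using h⟩
  have : NeZero d := ⟨hd⟩
  let φ := algebraMap R (FractionRing R)
  have hφb : φ b ≠ 0 := (map_ne_zero_iff φ (IsFractionRing.injective R _)).mpr hb
  set ζ := Complex.exp (2 * Real.pi * Complex.I / d)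
  have hζ : IsPrimitiveRoot (algebraMap ℂ (FractionRing R) ζ) d :=
    (Complex.isPrimitiveRoot_exp d hd).map_of_injective (algebraMap ℂ _).injective
  obtain ⟨k, -, hk⟩ := hζ.eq_pow_of_pow_eq_one (ξ := φ a / φ b) <| by
    rw [div_pow, ← map_pow, ← map_pow, h, map_pow, div_self (pow_ne_zero _ hφb)]
  refine ⟨ζ ^ k, IsFractionRing.injective R (FractionRing R) ?_⟩
  rw [Algebra.smul_def, map_mul, ← IsScalarTower.algebraMap_apply, map_pow, hk,
    div_mul_cancel₀ _ hφb]

theorem statement6_general {n d m : ℕ} (f : MvPolynomial (Fin n) ℂ) (hf0 : f ≠ 0)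
    (hf : f.IsHomogeneous d)
    (α : ℂ) (ℓ : Fin m → MvPolynomial (Fin n) ℂ)
    (hhom : ∀ i, (ℓ i).IsHomogeneous 1) (hne : ∀ i, ℓ i ≠ 0)
    (heq : f = C α * ((∏ i, (1 + ℓ i)) - 1)) :
    m = d ∧ (∀ i j, ∃ c : ℂ, ℓ i = c • ℓ j) ∧ (∀ i, ∃ c : ℂ, f = c • ℓ i ^ d) := by
  have hα : α ≠ 0 := by
    rintro rfl
    simp [hf0] at heq
  have hdil : Polynomial.C (C α) * (∏ i, (1 + Polynomial.C (ℓ i) * Polynomial.X) - 1) =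
      Polynomial.C f * Polynomial.X ^ d := by
    simpa [hf.dilation_eq, (hhom _).dilation_eq, map_prod] using (congrArg dilation heq).symm
  have hmd : m = d := by
    simpa using Polynomial.card_eq_of_C_mul_prod_one_add_sub_one_eq hne hf0 hdil
  have hpow (i : Fin m) : f = ((-1) ^ (d + 1) * α) • ℓ i ^ d := by
    rw [smul_eq_C_mul]
    simpa using Polynomial.eq_mul_pow_of_C_mul_prod_one_add_sub_one_eq (hne i) hdil
  refine ⟨hmd, fun i j ↦ exists_smul_eq_of_pow_eq (hmd ▸ i.pos.ne') ?_, fun i ↦ ⟨_, hpow i⟩⟩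
  exact smul_right_injective _ (by simp [hα]) ((hpow i).symm.trans (hpow j))

/-- If a nonzero homogeneous `f` of degree `d ≥ 1` has an exact Kumar representation
`f = α(∏ (1 + ℓᵢ) - 1)` with nonzero homogeneous linear forms `ℓᵢ`, then `m = d`,
all the `ℓᵢ` are pairwise proportional, and `f` is a scalar multiple of `ℓᵢ^d`. -/
theorem statement6 {n d m : ℕ} (f : MvPolynomial (Fin n) ℂ) (hf0 : f ≠ 0)
    (hf : f.IsHomogeneous d) (hd : 1 ≤ d)
    (α : ℂ) (ℓ : Fin m → MvPolynomial (Fin n) ℂ)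
    (hhom : ∀ i, (ℓ i).IsHomogeneous 1) (hne : ∀ i, ℓ i ≠ 0)
    (heq : f = C α * ((∏ i, (1 + ℓ i)) - 1)) :
    m = d ∧ (∀ i j, ∃ c : ℂ, ℓ i = c • ℓ j) ∧ (∀ i, ∃ c : ℂ, f = c • ℓ i ^ d) :=
  statement6_general f hf0 hf α ℓ hhom hne heq
end
end

section
/- Let f = ℓ_1 ⋯ ℓ_d be a product of d ≥ 1 nonzero homogeneous linear forms over ℂ. Then the border Kumar complexity of f equals d: there exist α ∈ ℂ((ε)) and homogeneous linear forms L_1, …, L_d with coefficients in ℂ((ε)) such that α(∏_{i=1}^d (1 + L_i) − 1) has all coefficients in ℂ[[ε]] and is ≡ f (mod ε) (for instance α = ε^d and L_i = ε^{−1}ℓ_i), and no such representation with fewer than d factors exists. -/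
/-!
For the upper bound take `α = ε ^ d` and `Lᵢ = ε⁻¹ ℓᵢ`: then
`α (∏ (1 + Lᵢ) - 1) = ∏ (ε + ℓᵢ) - ε ^ d` is a polynomial over `ℂ[[ε]]`, and since `d ≥ 1`
it reduces to `∏ ℓᵢ` modulo `ε`.

For the lower bound, every monomial of `f` occurs in any `F` with `F ≡ f (mod ε)`, so
`deg f ≤ deg F`; but `α (∏ᵢ₌₁ᵐ (1 + Lᵢ) - 1)` has degree at most `m`, while `f` is a nonzero
form of degree `d`.
-/

open MvPolynomial

noncomputable section

/-- The border Kumar complexity of `f`: the least `m` for which there are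
`α ∈ ℂ((ε))` and homogeneous linear forms `ℓ₁, …, ℓ_m` over `ℂ((ε))` such that
`α(∏ (1 + ℓᵢ) - 1)` has coefficients in `ℂ[[ε]]` and is `≡ f (mod ε)`. -/
def borderKumar {n : ℕ} (f : MvPolynomial (Fin n) ℂ) : ℕ :=
  sInf {m | ∃ (α : LaurentSeries ℂ) (ℓ : Fin m → MvPolynomial (Fin n) (LaurentSeries ℂ)),
    (∀ i, (ℓ i).IsHomogeneous 1) ∧ ApproxTo (C α * ((∏ i, (1 + ℓ i)) - 1)) f}

section ApproxTo

variable {σ : Type*}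

theorem approxTo_map_ofPowerSeries (G : MvPolynomial σ (PowerSeries ℂ)) :
    ApproxTo (map (HahnSeries.ofPowerSeries ℤ ℂ) G) (map PowerSeries.constantCoeff G) := by
  refine ⟨fun m k hk => ?_, fun m => ?_⟩
  · rw [coeff_map, PowerSeries.coeff_coe, if_pos hk]
  · rw [coeff_map, coeff_map, ← PowerSeries.coeff_zero_eq_constantCoeff_apply,
      ← LaurentSeries.coeff_coe_powerSeries, Nat.cast_zero]

theorem ApproxTo.totalDegree_le {F : MvPolynomial σ (LaurentSeries ℂ)} {f : MvPolynomial σ ℂ}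
    (h : ApproxTo F f) : f.totalDegree ≤ F.totalDegree := by
  refine Finset.sup_mono fun m hm => mem_support_iff.mpr fun hF => ?_
  rw [mem_support_iff, ← h.2 m, hF, HahnSeries.coeff_zero] at hm
  exact hm rfl

theorem approxTo_C_mul_prod_one_add_sub_one {d : ℕ} (hd : d ≠ 0) (ℓ : Fin d → MvPolynomial σ ℂ) :
    ApproxTo (C (HahnSeries.single 1 1 ^ d) *
      ((∏ i, (1 + C (HahnSeries.single 1 1)⁻¹ * map HahnSeries.C (ℓ i))) - 1)) (∏ i, ℓ i) := by
  set ε : LaurentSeries ℂ := HahnSeries.single 1 1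
  have hε : ε ≠ 0 := HahnSeries.single_ne_zero one_ne_zero
  set G : MvPolynomial σ (PowerSeries ℂ) :=
    ∏ i, (C PowerSeries.X + map PowerSeries.C (ℓ i)) - C (PowerSeries.X ^ d)
  have hC : (HahnSeries.ofPowerSeries ℤ ℂ).comp PowerSeries.C = HahnSeries.C :=
    RingHom.ext HahnSeries.ofPowerSeries_C
  have hG : map (HahnSeries.ofPowerSeries ℤ ℂ) G =
      C (ε ^ d) * ((∏ i, (1 + C ε⁻¹ * map HahnSeries.C (ℓ i))) - 1) := calc
    _ = ∏ i, (C ε + map HahnSeries.C (ℓ i)) - C (ε ^ d) := by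
      simp only [G, map_sub, map_prod, map_add, map_C, map_map, HahnSeries.ofPowerSeries_X, hC,
        map_pow, ε]
    _ = C (ε ^ d) * ∏ i, (1 + C ε⁻¹ * map HahnSeries.C (ℓ i)) - C (ε ^ d) := by
      rw [map_pow, ← Fin.prod_const d (C ε), ← Finset.prod_mul_distrib]
      refine congrArg (· - _) (Finset.prod_congr rfl fun i _ => ?_)
      rw [mul_add, mul_one, ← mul_assoc, ← C_mul, mul_inv_cancel₀ hε, C_1, one_mul]
    _ = _ := (mul_sub_one (C (ε ^ d)) _).symm
  have hGf : map PowerSeries.constantCoeff G = ∏ i, ℓ i := by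
    simp [G, map_map, PowerSeries.constantCoeff_comp_C, hd, map_id]
  rw [← hG, ← hGf]
  exact approxTo_map_ofPowerSeries G

end ApproxTo

namespace MvPolynomial

theorem totalDegree_C_mul_prod_one_add_sub_one_le {σ R : Type*} [CommRing R] {m : ℕ} (α : R)
    (L : Fin m → MvPolynomial σ R) (hL : ∀ i, (L i).totalDegree ≤ 1) :
    (C α * ((∏ i, (1 + L i)) - 1)).totalDegree ≤ m := by
  rw [C_mul', ← C_1]
  calc (α • ((∏ i, (1 + L i)) - C 1)).totalDegree
      ≤ (∏ i, (1 + L i)).totalDegree := (totalDegree_smul_le _ _).trans (totalDegree_sub_C_le _ _)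
    _ ≤ ∑ i, (1 + L i).totalDegree := totalDegree_finsetProd _ _
    _ ≤ ∑ _i : Fin m, 1 := Finset.sum_le_sum fun i _ =>
        (totalDegree_add _ _).trans (max_le (totalDegree_one.trans_le zero_le_one) (hL i))
    _ = m := by simp

end MvPolynomial

/-- If `f` is a product of `d ≥ 1` nonzero homogeneous linear forms, then its
border Kumar complexity equals `d`. -/
theorem statement8 {n d : ℕ} (hd : 1 ≤ d) (ℓ : Fin d → MvPolynomial (Fin n) ℂ)
    (hhom : ∀ i, (ℓ i).IsHomogeneous 1) (hne : ∀ i, ℓ i ≠ 0) :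
    borderKumar (∏ i, ℓ i) = d := by
  refine IsLeast.csInf_eq ⟨⟨_, _, fun i => ((hhom i).map _).C_mul _,
    approxTo_C_mul_prod_one_add_sub_one (Nat.one_le_iff_ne_zero.mp hd) ℓ⟩, ?_⟩
  rintro m ⟨α, L, hL, hF⟩
  have hprod : (∏ i, ℓ i).IsHomogeneous d := by
    simpa using IsHomogeneous.prod Finset.univ ℓ (fun _ => 1) fun i _ => hhom i
  calc d = (∏ i, ℓ i).totalDegree :=
        (hprod.totalDegree (Finset.prod_ne_zero_iff.mpr fun i _ => hne i)).symm
    _ ≤ _ := hF.totalDegree_le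
    _ ≤ m := totalDegree_C_mul_prod_one_add_sub_one_le α L fun i => (hL i).totalDegree_le
end
end

section
/- Let f ∈ ℂ[x_1,…,x_n] be homogeneous of degree d and suppose there exist γ ∈ ℂ, an integer N ≥ 1, and homogeneous linear forms ℓ_1, …, ℓ_m in x_1,…,x_n with coefficients in ℂ((ε)) such that γ ε^N (∏_{i=1}^m (1 + ℓ_i) − 1) has all coefficients in ℂ[[ε]] and is ≡ f (mod ε). Then d ≤ m and f is a product of homogeneous linear forms over ℂ. -/
open MvPolynomial

noncomputable section

/-!
Every factor splits as `1 + ℓᵢ = ε^{vᵢ} Qᵢ` with `Qᵢ` a polynomial over `ℂ[[ε]]` whose reduction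
mod `ε` is nonzero (Gauss normalization). Since `N ≥ 1`, adding `γ ε^N` does not change the
reduction, so `f` is the reduction of `γ ε^N ∏ (1 + ℓᵢ) = γ ε^{N + Σ vᵢ} ∏ Qᵢ`. Reduction mod `ε`
is a ring homomorphism onto the domain `ℂ[x]`, so `∏ Qᵢ` reduces to a nonzero polynomial; hence
`N + Σ vᵢ = 0` (otherwise the reduction is either undefined or zero) and `f = γ ∏ (Qᵢ mod ε)`.
Each `Qᵢ mod ε` has degree at most one, and the top homogeneous component of a product is the
product of the top components: the homogeneous `f` is therefore `γ` times a product of at most `m`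
linear forms and constants, and the scalar can be absorbed into a linear factor because `f` has
no constant term.
-/

open scoped PowerSeries LaurentSeries

theorem HahnSeries.prod_single {Γ R ι : Type*} [AddCommMonoid Γ] [PartialOrder Γ]
    [IsOrderedCancelAddMonoid Γ] [CommSemiring R] (s : Finset ι) (a : ι → Γ) (r : ι → R) :
    ∏ i ∈ s, single (a i) (r i) = single (∑ i ∈ s, a i) (∏ i ∈ s, r i) := by
  classical
  induction s using Finset.induction_on with
  | empty => rfl
  | insert j s hj ih =>
    rw [Finset.prod_insert hj, ih, single_mul_single, Finset.sum_insert hj, Finset.prod_insert hj]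

theorem HahnSeries.ofPowerSeries_apply_coeff_zero {R : Type*} [Semiring R] (x : R⟦X⟧) :
    (ofPowerSeries ℤ R x).coeff 0 = PowerSeries.constantCoeff x := by
  simp [PowerSeries.coeff_coe]

theorem LaurentSeries.mem_range_ofPowerSeries_iff {R : Type*} [Semiring R] (x : R⸨X⸩) :
    x ∈ Set.range (HahnSeries.ofPowerSeries ℤ R) ↔ ∀ k < 0, x.coeff k = 0 := by
  constructor
  · rintro ⟨y, rfl⟩ k hk
    rw [PowerSeries.coeff_coe, if_pos hk]
  · refine fun hx => ⟨PowerSeries.mk fun n => x.coeff n, ?_⟩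
    ext k
    rw [PowerSeries.coeff_coe]
    split_ifs with hk
    · exact (hx k hk).symm
    · simp [Int.natAbs_of_nonneg (not_lt.mp hk)]

namespace MvPolynomial

variable {σ R : Type*}

section PowerSeriesCoefficients

variable [CommSemiring R]

theorem mem_range_map_ofPowerSeries_iff (P : MvPolynomial σ R⸨X⸩) :
    P ∈ Set.range (map (HahnSeries.ofPowerSeries ℤ R)) ↔
      ∀ μ, ∀ k < 0, (P.coeff μ).coeff k = 0 := by
  simp only [mem_range_map_iff_coeffs_subset, Set.subset_def, Finset.mem_coe, mem_coeffs_iff,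
    LaurentSeries.mem_range_ofPowerSeries_iff]
  constructor
  · intro h μ k hk
    by_cases hμ : μ ∈ P.support
    · exact h _ ⟨μ, hμ, rfl⟩ k hk
    · rw [notMem_support_iff.mp hμ, HahnSeries.coeff_zero]
  · rintro h _ ⟨μ, -, rfl⟩
    exact h μ

theorem exists_eq_C_single_mul_map_ofPowerSeries {P : MvPolynomial σ R⸨X⸩} (hP : P ≠ 0) :
    ∃ (v : ℤ) (Q : MvPolynomial σ R⟦X⟧),
      P = C (HahnSeries.single v 1) * map (HahnSeries.ofPowerSeries ℤ R) Q ∧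
      map PowerSeries.constantCoeff Q ≠ 0 ∧ Q.totalDegree ≤ P.totalDegree := by
  have hsupp : P.support.Nonempty := support_nonempty.mpr hP
  obtain ⟨μ₀, hμ₀, hv⟩ := Finset.exists_mem_eq_inf' hsupp fun μ => (P.coeff μ).order
  set v := P.support.inf' hsupp fun μ => (P.coeff μ).order
  have hcoeff : ∀ μ k, ((C (HahnSeries.single (-v) 1) * P).coeff μ).coeff k =
      (P.coeff μ).coeff (k + v) := fun μ k => by
    have := HahnSeries.coeff_single_mul_add (r := 1) (x := P.coeff μ) (a := k + v) (b := -v)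
    rwa [add_neg_cancel_right, one_mul, ← coeff_C_mul] at this
  obtain ⟨Q, hQ⟩ := (mem_range_map_ofPowerSeries_iff (C (HahnSeries.single (-v) 1) * P)).mpr
    fun μ k hk => by
      rw [hcoeff]
      by_cases hμ : μ ∈ P.support
      · exact HahnSeries.coeff_eq_zero_of_lt_order
          (by have := Finset.inf'_le (fun μ => (P.coeff μ).order) hμ; omega)
      · rw [notMem_support_iff.mp hμ, HahnSeries.coeff_zero]
  refine ⟨v, Q, ?_, ?_, ?_⟩
  · rw [hQ, ← mul_assoc, ← C_mul, HahnSeries.single_mul_single, add_neg_cancel, one_mul,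
      HahnSeries.single_zero_one, C_1, one_mul]
  · refine ne_zero_iff.mpr ⟨μ₀, ?_⟩
    rw [coeff_map, ← HahnSeries.ofPowerSeries_apply_coeff_zero, ← coeff_map, hQ, hcoeff, zero_add,
      hv]
    exact HahnSeries.coeff_order_eq_zero.not.mpr (mem_support_iff.mp hμ₀)
  · refine Finset.sup_mono fun μ hμ => mem_support_iff.mpr fun hPμ => ?_
    have : (map (HahnSeries.ofPowerSeries ℤ R) Q).coeff μ = 0 := by
      rw [hQ, coeff_C_mul, hPμ, mul_zero]
    rw [coeff_map, map_eq_zero_iff _ HahnSeries.ofPowerSeries_injective] at this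
    exact mem_support_iff.mp hμ this

theorem map_constantCoeff_eq_C_mul_of_map_ofPowerSeries_eq [NoZeroDivisors R]
    {P Q : MvPolynomial σ R⟦X⟧} {s : ℤ} {c : R}
    (h : map (HahnSeries.ofPowerSeries ℤ R) P =
      C (HahnSeries.single s c) * map (HahnSeries.ofPowerSeries ℤ R) Q)
    (hP : map PowerSeries.constantCoeff P ≠ 0) (hQ : map PowerSeries.constantCoeff Q ≠ 0) :
    map PowerSeries.constantCoeff P = C c * map PowerSeries.constantCoeff Q := by
  have hcoeff : ∀ μ k, (HahnSeries.ofPowerSeries ℤ R (P.coeff μ)).coeff (k + s) =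
      c * (HahnSeries.ofPowerSeries ℤ R (Q.coeff μ)).coeff k := fun μ k => by
    rw [← coeff_map, h, coeff_C_mul, coeff_map, HahnSeries.coeff_single_mul_add]
  have hc : c ≠ 0 := by
    rintro rfl
    rw [HahnSeries.single_eq_zero, C_0, zero_mul,
      ← map_zero (map (σ := σ) (HahnSeries.ofPowerSeries ℤ R)),
      (map_injective _ HahnSeries.ofPowerSeries_injective).eq_iff] at h
    exact hP (by rw [h, map_zero])
  obtain ⟨μ₀, hμ₀⟩ := ne_zero_iff.mp hQ
  rw [coeff_map] at hμ₀
  obtain hs | rfl | hs := lt_trichotomy s 0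
  · have := hcoeff μ₀ 0
    rw [zero_add, PowerSeries.coeff_coe, if_pos hs, HahnSeries.ofPowerSeries_apply_coeff_zero]
      at this
    exact absurd this.symm (mul_ne_zero hc hμ₀)
  · ext μ
    rw [coeff_map, coeff_C_mul, coeff_map, ← HahnSeries.ofPowerSeries_apply_coeff_zero,
      ← HahnSeries.ofPowerSeries_apply_coeff_zero, ← hcoeff, add_zero]
  · refine absurd (ext _ _ fun μ => ?_) hP
    rw [coeff_map, coeff_zero, ← HahnSeries.ofPowerSeries_apply_coeff_zero, ← neg_add_cancel s,
      hcoeff, PowerSeries.coeff_coe, if_pos (neg_neg_of_pos hs), mul_zero]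

end PowerSeriesCoefficients

section HomogeneousComponent

variable [CommSemiring R]

theorem IsHomogeneous.constantCoeff_eq_zero {p : MvPolynomial σ R} {n : ℕ}
    (hp : p.IsHomogeneous n) (hn : n ≠ 0) : constantCoeff p = 0 := by
  rw [constantCoeff_eq]
  exact hp.coeff_eq_zero (by simpa using hn.symm)

theorem homogeneousComponent_mul_of_totalDegree_le {p q : MvPolynomial σ R} {a b : ℕ}
    (hp : p.totalDegree ≤ a) (hq : q.totalDegree ≤ b) :
    homogeneousComponent (a + b) (p * q) =
      homogeneousComponent a p * homogeneousComponent b q := by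
  classical
  ext μ
  rw [coeff_homogeneousComponent, coeff_mul, coeff_mul]
  split_ifs with hμ
  · refine Finset.sum_congr rfl fun x hx => ?_
    rw [Finset.HasAntidiagonal.mem_antidiagonal] at hx
    rw [coeff_homogeneousComponent, coeff_homogeneousComponent]
    by_cases hx₁ : x.1.degree = a
    · have hx₂ : x.2.degree = b := by rw [← hx, map_add, hx₁] at hμ; omega
      rw [if_pos hx₁, if_pos hx₂]
    · rw [if_neg hx₁, zero_mul]
      by_contra hne
      have h₁ : x.1.degree ≤ a :=
        (le_totalDegree (mem_support_iff.mpr (left_ne_zero_of_mul hne))).trans hp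
      have h₂ : x.2.degree ≤ b :=
        (le_totalDegree (mem_support_iff.mpr (right_ne_zero_of_mul hne))).trans hq
      rw [← hx, map_add] at hμ
      omega
  · refine (Finset.sum_eq_zero fun x hx => ?_).symm
    rw [Finset.HasAntidiagonal.mem_antidiagonal] at hx
    rw [coeff_homogeneousComponent, coeff_homogeneousComponent]
    split_ifs with h₁ h₂
    · exact absurd (by rw [← hx, map_add, h₁, h₂]) hμ
    all_goals simp

theorem homogeneousComponent_prod_of_totalDegree_le {ι : Type*} (s : Finset ι)
    (g : ι → MvPolynomial σ R) (a : ι → ℕ) (h : ∀ i ∈ s, (g i).totalDegree ≤ a i) :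
    homogeneousComponent (∑ i ∈ s, a i) (∏ i ∈ s, g i) =
      ∏ i ∈ s, homogeneousComponent (a i) (g i) := by
  classical
  induction s using Finset.induction_on with
  | empty => simp [homogeneousComponent_zero]
  | insert j s hj ih =>
    rw [Finset.sum_insert hj, Finset.prod_insert hj, Finset.prod_insert hj,
      homogeneousComponent_mul_of_totalDegree_le (h j (Finset.mem_insert_self j s)),
      ih fun i hi => h i (Finset.mem_insert_of_mem hi)]
    exact (totalDegree_finsetProd s g).trans
      (Finset.sum_le_sum fun i hi => h i (Finset.mem_insert_of_mem hi))

theorem homogeneousComponent_totalDegree_ne_zero {p : MvPolynomial σ R} (hp : p ≠ 0) :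
    homogeneousComponent p.totalDegree p ≠ 0 := by
  obtain ⟨μ, hμ, hdeg⟩ : ∃ μ ∈ p.support, p.totalDegree = μ.degree :=
    Finset.exists_mem_eq_sup p.support (support_nonempty.mpr hp) Finsupp.degree
  refine ne_zero_iff.mpr ⟨μ, ?_⟩
  rw [coeff_homogeneousComponent, if_pos hdeg.symm]
  exact mem_support_iff.mp hμ

end HomogeneousComponent

section LinearFormProducts

variable (σ R) [CommSemiring R]

def linearFormProducts : Submonoid (MvPolynomial σ R) where
  carrier := {f | ∃ (c : R) (k : ℕ) (L : Fin k → MvPolynomial σ R),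
    (∀ i, (L i).IsHomogeneous 1) ∧ f = C c * ∏ i, L i}
  one_mem' := ⟨1, 0, Fin.elim0, fun i => i.elim0, by simp⟩
  mul_mem' := by
    rintro _ _ ⟨c, k, L, hL, rfl⟩ ⟨c', k', L', hL', rfl⟩
    refine ⟨c * c', k + k', Fin.append L L', fun i => ?_, ?_⟩
    · refine Fin.addCases (fun i => ?_) (fun i => ?_) i
      · simpa using hL i
      · simpa using hL' i
    · rw [Fin.prod_univ_add, C_mul]
      simp only [Fin.append_left, Fin.append_right]
      ring

variable {σ R}

theorem mem_linearFormProducts {f : MvPolynomial σ R} :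
    f ∈ linearFormProducts σ R ↔ ∃ (c : R) (k : ℕ) (L : Fin k → MvPolynomial σ R),
      (∀ i, (L i).IsHomogeneous 1) ∧ f = C c * ∏ i, L i :=
  Iff.rfl

theorem C_mem_linearFormProducts (c : R) : C c ∈ linearFormProducts σ R :=
  mem_linearFormProducts.mpr ⟨c, 0, Fin.elim0, fun i => i.elim0, by simp⟩

theorem IsHomogeneous.mem_linearFormProducts_of_le_one {p : MvPolynomial σ R} {n : ℕ}
    (hp : p.IsHomogeneous n) (hn : n ≤ 1) : p ∈ linearFormProducts σ R := by
  obtain rfl | rfl : n = 0 ∨ n = 1 := by omega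
  · rw [totalDegree_eq_zero_iff_eq_C.mp ((totalDegree_zero_iff_isHomogeneous σ).mpr hp)]
    exact C_mem_linearFormProducts _
  · exact mem_linearFormProducts.mpr ⟨1, 1, fun _ => p, fun _ => hp, by simp⟩

theorem exists_prod_of_mem_linearFormProducts {f : MvPolynomial σ R}
    (hf : f ∈ linearFormProducts σ R) (hf0 : f.coeff 0 = 0) :
    ∃ (k : ℕ) (L : Fin k → MvPolynomial σ R), (∀ i, (L i).IsHomogeneous 1) ∧ f = ∏ i, L i := by
  obtain ⟨c, k, L, hL, rfl⟩ := mem_linearFormProducts.mp hf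
  cases k with
  | zero =>
    -- then `f = C c` with `c = 0`, the product of the single linear form `0`
    refine ⟨1, fun _ => 0, fun _ => isHomogeneous_zero _ _ _, ?_⟩
    simp_all
  | succ k =>
    refine ⟨k + 1, Fin.cons (C c * L 0) (Fin.tail L),
      Fin.cases ((hL 0).C_mul c) fun i => hL _, ?_⟩
    rw [Fin.prod_univ_succ, Fin.prod_univ_succ, Fin.cons_zero, mul_assoc]
    simp [Fin.tail]

theorem IsHomogeneous.le_card_and_mem_linearFormProducts {R : Type*} [CommRing R] [IsDomain R]
    {ι : Type*} [Fintype ι] {f : MvPolynomial σ R} {d : ℕ} (hf : f.IsHomogeneous d)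
    (hf0 : f ≠ 0) {γ : R} {g : ι → MvPolynomial σ R} (hfg : f = C γ * ∏ i, g i)
    (hg : ∀ i, (g i).totalDegree ≤ 1) :
    d ≤ Fintype.card ι ∧ f ∈ linearFormProducts σ R := by
  have htop : homogeneousComponent (∑ i, (g i).totalDegree) f =
      C γ * ∏ i, homogeneousComponent (g i).totalDegree (g i) := by
    rw [hfg, homogeneousComponent_C_mul,
      homogeneousComponent_prod_of_totalDegree_le _ _ _ fun i _ => le_rfl]
  have htop_ne : homogeneousComponent (∑ i, (g i).totalDegree) f ≠ 0 := by
    rw [hfg] at hf0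
    rw [htop]
    refine mul_ne_zero (left_ne_zero_of_mul hf0) (Finset.prod_ne_zero_iff.mpr fun i hi => ?_)
    exact homogeneousComponent_totalDegree_ne_zero
      (Finset.prod_ne_zero_iff.mp (right_ne_zero_of_mul hf0) i hi)
  have hd : ∑ i, (g i).totalDegree = d := by
    by_contra h
    rw [homogeneousComponent_of_mem hf, if_neg h] at htop_ne
    exact htop_ne rfl
  refine ⟨hd ▸ (Finset.sum_le_sum fun i _ => hg i).trans (by simp), ?_⟩
  rw [← homogeneousComponent_eq_self hf, ← hd, htop]
  exact mul_mem (C_mem_linearFormProducts γ) (prod_mem fun i _ =>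
    (homogeneousComponent_isHomogeneous _ _).mem_linearFormProducts_of_le_one (hg i))

end LinearFormProducts

end MvPolynomial

theorem ApproxTo.exists_map_eq {σ : Type*} {F : MvPolynomial σ (LaurentSeries ℂ)}
    {f : MvPolynomial σ ℂ} (h : ApproxTo F f) :
    ∃ P : MvPolynomial σ ℂ⟦X⟧, map (HahnSeries.ofPowerSeries ℤ ℂ) P = F ∧
      map PowerSeries.constantCoeff P = f := by
  obtain ⟨P, rfl⟩ := (mem_range_map_ofPowerSeries_iff F).mpr h.1
  refine ⟨P, rfl, ext _ _ fun μ => ?_⟩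
  rw [coeff_map, ← HahnSeries.ofPowerSeries_apply_coeff_zero, ← coeff_map, h.2]

theorem ApproxTo.exists_affine_factorization {σ ι : Type*} [Fintype ι]
    {f : MvPolynomial σ ℂ} (hf0 : f ≠ 0) {γ : ℂ} {N : ℕ} (hN : 1 ≤ N)
    {ℓ : ι → MvPolynomial σ (LaurentSeries ℂ)} (hhom : ∀ i, (ℓ i).IsHomogeneous 1)
    (happrox : ApproxTo (C (HahnSeries.single (N : ℤ) γ) * ((∏ i, (1 + ℓ i)) - 1)) f) :
    ∃ g : ι → MvPolynomial σ ℂ, (∀ i, (g i).totalDegree ≤ 1) ∧ f = C γ * ∏ i, g i := by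
  obtain ⟨P, hPF, hPf⟩ := happrox.exists_map_eq
  have hne : ∀ i, 1 + ℓ i ≠ 0 := fun i h => by
    simpa [(hhom i).constantCoeff_eq_zero one_ne_zero] using congrArg constantCoeff h
  choose v Q hQ hQf hQdeg using fun i => exists_eq_C_single_mul_map_ofPowerSeries (hne i)
  have hprod : ∏ i, (1 + ℓ i) =
      C (HahnSeries.single (∑ i, v i) 1) * map (HahnSeries.ofPowerSeries ℤ ℂ) (∏ i, Q i) := by
    rw [Finset.prod_congr rfl fun i _ => hQ i, Finset.prod_mul_distrib, ← map_prod C,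
      HahnSeries.prod_single, Finset.prod_const_one, map_prod]
  -- `P'` lifts `F + γ ε^N = γ ε^N ∏ (1 + ℓᵢ)` to `ℂ[[ε]]`
  set P' := P + C (PowerSeries.C γ * PowerSeries.X ^ N)
  have hP' : map (HahnSeries.ofPowerSeries ℤ ℂ) P' =
      C (HahnSeries.single (N + ∑ i, v i) γ) * map (HahnSeries.ofPowerSeries ℤ ℂ) (∏ i, Q i) := by
    have hlift : HahnSeries.ofPowerSeries ℤ ℂ (PowerSeries.C γ * PowerSeries.X ^ N) =
        HahnSeries.single (N : ℤ) γ := by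
      simp
    calc map (HahnSeries.ofPowerSeries ℤ ℂ) P'
        = C (HahnSeries.single (N : ℤ) γ) * ∏ i, (1 + ℓ i) := by
          rw [map_add, hPF, map_C, hlift]
          ring
      _ = _ := by rw [hprod, ← mul_assoc, ← C_mul, HahnSeries.single_mul_single, mul_one]
  have hP'f : map PowerSeries.constantCoeff P' = f := by
    simp [P', hPf, Nat.one_le_iff_ne_zero.mp hN]
  have hQ0 : map PowerSeries.constantCoeff (∏ i, Q i) ≠ 0 := by
    rw [map_prod]
    exact Finset.prod_ne_zero_iff.mpr fun i _ => hQf i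
  refine ⟨fun i => map PowerSeries.constantCoeff (Q i), fun i => ?_, ?_⟩
  · exact (Finset.sup_mono (support_map_subset _ _)).trans <| (hQdeg i).trans <|
      (totalDegree_add _ _).trans (max_le (by simp) (hhom i).totalDegree_le)
  · rw [← hP'f, map_constantCoeff_eq_C_mul_of_map_ofPowerSeries_eq hP' (hP'f ▸ hf0) hQ0, map_prod]

/-- If a nonzero homogeneous `f` of degree `d` satisfies
`f ≡ γ ε^N (∏ (1 + ℓᵢ) - 1) (mod ε)` with `N ≥ 1`, then `d ≤ m` and `f` is a
product of homogeneous linear forms over `ℂ`. -/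
theorem statement9 {n d m : ℕ} (f : MvPolynomial (Fin n) ℂ) (hf0 : f ≠ 0)
    (hf : f.IsHomogeneous d)
    (γ : ℂ) (N : ℕ) (hN : 1 ≤ N)
    (ℓ : Fin m → MvPolynomial (Fin n) (LaurentSeries ℂ))
    (hhom : ∀ i, (ℓ i).IsHomogeneous 1)
    (happrox : ApproxTo
      (C (HahnSeries.single (N : ℤ) γ) * ((∏ i, (1 + ℓ i)) - 1)) f) :
    d ≤ m ∧ ∃ (k : ℕ) (L : Fin k → MvPolynomial (Fin n) ℂ),
      (∀ i, (L i).IsHomogeneous 1) ∧ f = ∏ i, L i := by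
  have hf_const : f.coeff 0 = 0 := by
    rw [← happrox.2 0]
    simp [← constantCoeff_eq, fun i => (hhom i).constantCoeff_eq_zero one_ne_zero]
  obtain ⟨g, hg, hfg⟩ := happrox.exists_affine_factorization hf0 hN hhom
  obtain ⟨hdm, hmem⟩ := hf.le_card_and_mem_linearFormProducts hf0 hfg hg
  exact ⟨by simpa using hdm, exists_prod_of_mem_linearFormProducts hmem hf_const⟩
end
end

section
/- Let f ∈ ℂ[x_1,…,x_n] be homogeneous of degree d and suppose there exist γ ∈ ℂ and homogeneous linear forms ℓ_1, …, ℓ_m in x_1,…,x_n with coefficients in ℂ((ε)) such that γ (∏_{i=1}^m (1 + ℓ_i) − 1) has all coefficients in ℂ[[ε]] and is ≡ f (mod ε). Then the (exact, non-border) Waring rank of f satisfies WR(f) ≤ m. -/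
open MvPolynomial

noncomputable section

/-! If `γ = 0` then `f = 0`. Otherwise `∏ (1 + ℓᵢ) = 1 + γ⁻¹ F` has coefficients in `ℂ[[ε]]`,
and so has its degree-`k` part `e_k(ℓ)`. Evaluated at a basis vector `e_j`, this says that the
`X j`-coefficients of the `ℓᵢ` are the roots of a monic polynomial over `ℂ[[ε]]`; since `ℂ[[ε]]`
is integrally closed, the `ℓᵢ` are defined over `ℂ[[ε]]`, and setting `ε = 0` gives an exact
identity `f = γ (∏ (1 + ℓᵢ⁰) - 1)` over `ℂ`. Comparing homogeneous parts, `e_k(ℓ⁰) = 0` for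
`0 < k < d` and `f = γ e_d(ℓ⁰)`, so Newton's identities give `f = γ (-1)^(d+1) / d • ∑ (ℓᵢ⁰)^d`,
a sum of `m` `d`-th powers once a `d`-th root of the scalar is absorbed into the `ℓᵢ⁰`. -/

open Finset
open scoped PowerSeries LaurentSeries

theorem LaurentSeries.coeff_algebraMap {R : Type*} [CommSemiring R] (p : R⟦X⟧) (i : ℤ) :
    (algebraMap R⟦X⟧ R⸨X⸩ p).coeff i = if i < 0 then 0 else PowerSeries.coeff i.natAbs p := by
  rw [LaurentSeries.coe_algebraMap, PowerSeries.coeff_coe]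

theorem LaurentSeries.mem_range_algebraMap_of_coeff_neg {R : Type*} [CommSemiring R]
    {z : R⸨X⸩} (h : ∀ k : ℤ, k < 0 → z.coeff k = 0) :
    z ∈ Set.range (algebraMap R⟦X⟧ R⸨X⸩) := by
  refine ⟨PowerSeries.mk fun s => z.coeff s, HahnSeries.coeff_injective <| funext fun i => ?_⟩
  rw [LaurentSeries.coeff_algebraMap]
  split_ifs with hi
  · exact (h i hi).symm
  · rw [PowerSeries.coeff_mk, Int.natAbs_of_nonneg (not_lt.mp hi)]

theorem ApproxTo.exists_lift {σ : Type*} {F : MvPolynomial σ ℂ⸨X⸩} {f : MvPolynomial σ ℂ}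
    (h : ApproxTo F f) :
    ∃ G : MvPolynomial σ ℂ⟦X⟧,
      map (algebraMap ℂ⟦X⟧ ℂ⸨X⸩) G = F ∧ map PowerSeries.constantCoeff G = f := by
  obtain ⟨G, rfl⟩ : F ∈ Set.range (map (algebraMap ℂ⟦X⟧ ℂ⸨X⸩)) := by
    refine mem_range_map_iff_coeffs_subset.mpr fun c hc => ?_
    obtain ⟨μ, -, rfl⟩ := mem_coeffs_iff.mp hc
    exact LaurentSeries.mem_range_algebraMap_of_coeff_neg (h.1 μ)
  refine ⟨G, rfl, MvPolynomial.ext _ _ fun μ => ?_⟩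
  rw [← h.2 μ, coeff_map, coeff_map, LaurentSeries.coeff_algebraMap]
  simp

theorem Multiset.isIntegral_of_esymm_mem_range {R K : Type*} [CommRing R] [CommRing K]
    [Algebra R K] [Nontrivial K] {s : Multiset K}
    (hs : ∀ k, s.esymm k ∈ Set.range (algebraMap R K)) {x : K} (hx : x ∈ s) :
    IsIntegral R x := by
  set Q := (s.map fun a => Polynomial.X - Polynomial.C a).prod
  have hQ : Q ∈ Polynomial.lifts (algebraMap R K) := by
    refine (Polynomial.lifts_iff_coeff_lifts Q).mpr fun k => ?_
    rcases le_or_gt k (Multiset.card s) with hk | hk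
    · rw [Multiset.prod_X_sub_C_coeff s hk]
      obtain ⟨a, ha⟩ := hs (Multiset.card s - k)
      exact ⟨(-1) ^ (Multiset.card s - k) * a, by simp [ha]⟩
    · rw [Polynomial.coeff_eq_zero_of_natDegree_lt (by simpa [Q] using hk)]
      exact ⟨0, _root_.map_zero _⟩
  obtain ⟨q, hqQ, -, hq⟩ := Polynomial.lifts_and_degree_eq_and_monic hQ
    (Polynomial.monic_multiset_prod_of_monic _ _ fun a _ => Polynomial.monic_X_sub_C a)
  refine ⟨q, hq, ?_⟩
  rw [Polynomial.eval₂_eq_eval_map, hqQ, Polynomial.eval_multiset_prod]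
  exact Multiset.prod_eq_zero (Multiset.mem_map.mpr ⟨_, Multiset.mem_map_of_mem _ hx, by simp⟩)

namespace MvPolynomial

theorem IsHomogeneous.eq_sum_C_coeff_mul_X {σ R : Type*} [Fintype σ] [CommSemiring R]
    {p : MvPolynomial σ R} (hp : p.IsHomogeneous 1) :
    p = ∑ j, C (coeff (Finsupp.single j 1) p) * X j := by
  have hspan : p ∈ Submodule.span R (Set.range (X : σ → MvPolynomial σ R)) :=
    homogeneousSubmodule_one_eq_span_X (σ := σ) (R := R) ▸ hp
  clear hp
  induction hspan using Submodule.span_induction with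
  | mem _ hx =>
    obtain ⟨i, rfl⟩ := hx
    classical
    simp [coeff_X, Finsupp.single_left_inj]
  | zero => simp
  | add p q _ _ hp hq =>
    simp only [coeff_add, map_add, add_mul, sum_add_distrib]
    rw [← hp, ← hq]
  | smul a p _ hp =>
    simp only [coeff_smul, smul_eq_mul, map_mul, mul_assoc, ← mul_sum]
    rw [← hp, smul_eq_C_mul]

theorem IsHomogeneous.eval_piSingle_one {σ R : Type*} [Fintype σ] [DecidableEq σ]
    [CommSemiring R] {p : MvPolynomial σ R} (hp : p.IsHomogeneous 1) (j : σ) :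
    eval (Pi.single j 1) p = coeff (Finsupp.single j 1) p := by
  conv_lhs => rw [hp.eq_sum_C_coeff_mul_X]
  simp [Pi.single_apply]

theorem isHomogeneous_esymm (σ R : Type*) [Fintype σ] [CommSemiring R] (k : ℕ) :
    (esymm σ R k).IsHomogeneous k := by
  refine IsHomogeneous.sum _ _ _ fun t ht => ?_
  simpa [(mem_powersetCard.mp ht).2] using
    IsHomogeneous.prod t X (fun _ => 1) fun i _ => isHomogeneous_X R i

theorem prod_one_add_eq_sum_aeval_esymm {σ R S : Type*} [Fintype σ] [CommSemiring R]
    [CommSemiring S] [Algebra R S] (x : σ → S) :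
    ∏ i, (1 + x i) = ∑ k ∈ range (Fintype.card σ + 1), aeval x (esymm σ R k) := by
  rw [prod_one_add, sum_powerset, card_univ]
  simp [esymm, map_sum, map_prod]

theorem homogeneousComponent_map {σ R S : Type*} [CommSemiring R] [CommSemiring S]
    (f : R →+* S) (k : ℕ) (p : MvPolynomial σ R) :
    homogeneousComponent k (map f p) = map f (homogeneousComponent k p) := by
  ext μ
  simp only [coeff_homogeneousComponent, coeff_map]
  split_ifs <;> simp

theorem homogeneousComponent_prod_one_add {ι σ R : Type*} [Fintype ι] [CommRing R]
    {ℓ : ι → MvPolynomial σ R} (hℓ : ∀ i, (ℓ i).IsHomogeneous 1) (k : ℕ) :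
    homogeneousComponent k (∏ i, (1 + ℓ i)) = aeval ℓ (esymm ι R k) := by
  have hE : ∀ j, (aeval ℓ (esymm ι R j)).IsHomogeneous j := fun j => by
    simpa using (isHomogeneous_esymm ι R j).aeval ℓ hℓ
  rw [prod_one_add_eq_sum_aeval_esymm (R := R), map_sum]
  simp only [homogeneousComponent_of_mem (hE _), sum_ite_eq, mem_range]
  split_ifs with hk
  · rfl
  · rw [esymm, powersetCard_eq_empty.mpr (by simpa using hk), sum_empty, _root_.map_zero]


theorem mem_range_map_of_prod_one_add_mem_range {ι σ R K : Type*} [Fintype ι] [Fintype σ]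
    [CommRing R] [IsIntegrallyClosed R] [Field K] [Algebra R K]
    [IsFractionRing R K] {ℓ : ι → MvPolynomial σ K} (hℓ : ∀ i, (ℓ i).IsHomogeneous 1)
    (h : ∏ i, (1 + ℓ i) ∈ Set.range (map (algebraMap R K))) (i : ι) :
    ℓ i ∈ Set.range (map (algebraMap R K)) := by
  classical
  obtain ⟨P, hP⟩ := h
  have hesymm : ∀ k, aeval ℓ (esymm ι K k) = map (algebraMap R K) (homogeneousComponent k P) :=
    fun k => by rw [← homogeneousComponent_map, hP, homogeneousComponent_prod_one_add hℓ]
  have hcoeff : ∀ j, coeff (Finsupp.single j 1) (ℓ i) ∈ Set.range (algebraMap R K) := by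
    intro j
    rw [← (hℓ i).eval_piSingle_one j]
    refine IsIntegrallyClosed.isIntegral_iff.mp <| Multiset.isIntegral_of_esymm_mem_range
      (fun k => ⟨eval (Pi.single j 1) (homogeneousComponent k P), ?_⟩)
      (Multiset.mem_map_of_mem (fun i => eval (Pi.single j (1 : K)) (ℓ i)) (mem_univ_val i))
    have hpt : Pi.single j (1 : K) = algebraMap R K ∘ Pi.single j 1 := by
      ext j'; by_cases h : j' = j <;> simp [h]
    rw [← aeval_esymm_eq_multiset_esymm ι K]
    symm
    calc aeval (fun i => eval (Pi.single j 1) (ℓ i)) (esymm ι K k)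
        = eval (Pi.single j 1) (aeval ℓ (esymm ι K k)) :=
          (comp_aeval_apply ℓ (aeval (Pi.single j (1 : K))) (esymm ι K k)).symm
      _ = algebraMap R K (eval (Pi.single j 1) (homogeneousComponent k P)) := by
          rw [hesymm, eval_map, eval, coe_eval₂Hom, eval₂_comp_left, hpt]
          rfl
  choose c hc using hcoeff
  refine ⟨∑ j, C (c j) * X j, ?_⟩
  rw [(hℓ i).eq_sum_C_coeff_mul_X]
  simp [hc]

theorem aeval_psum_eq_of_aeval_esymm_eq_zero {σ R S : Type*} [Fintype σ] [CommRing R]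
    [CommRing S] [Algebra R S] (x : σ → S) {d : ℕ} (hd : 0 < d)
    (h : ∀ k, 0 < k → k < d → aeval x (esymm σ R k) = 0) :
    aeval x (psum σ R d) = (-1) ^ (d + 1) * d * aeval x (esymm σ R d) := by
  have newton : ∀ k, 0 < k →
      aeval x (psum σ R k) = (-1) ^ (k + 1) * k * aeval x (esymm σ R k) -
        ∑ a ∈ antidiagonal k with a.1 ∈ Set.Ioo 0 k,
          (-1) ^ a.1 * aeval x (esymm σ R a.1) * aeval x (psum σ R a.2) := fun k hk => by
    simpa using congrArg (aeval x) (psum_eq_mul_esymm_sub_sum σ R k hk)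
  have hpsum : ∀ k, 0 < k → k < d → aeval x (psum σ R k) = 0 := fun k hk hkd => by
    rw [newton k hk, h k hk hkd, mul_zero, zero_sub, neg_eq_zero]
    refine sum_eq_zero fun a ha => ?_
    obtain ⟨-, ha1, hak⟩ := mem_filter.mp ha
    rw [h a.1 ha1 (hak.trans hkd), mul_zero, zero_mul]
  rw [newton d hd, sub_eq_self]
  refine sum_eq_zero fun a ha => ?_
  obtain ⟨had, ha1, had'⟩ := mem_filter.mp ha
  rw [HasAntidiagonal.mem_antidiagonal] at had
  rw [hpsum a.2 (by omega) (by omega), mul_zero]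

end MvPolynomial

theorem waringRank_le {n d m : ℕ} {f : MvPolynomial (Fin n) ℂ}
    (ℓ : Fin m → MvPolynomial (Fin n) ℂ) (hℓ : ∀ i, (ℓ i).IsHomogeneous 1)
    (hf : f = ∑ i, ℓ i ^ d) : waringRank f d ≤ m :=
  Nat.sInf_le ⟨ℓ, hℓ, hf⟩

theorem waringRank_zero (n d : ℕ) : waringRank (0 : MvPolynomial (Fin n) ℂ) d = 0 :=
  Nat.le_zero.mp <| waringRank_le Fin.elim0 (fun i => i.elim0) (by simp)

theorem waringRank_le_of_eq_C_mul_sum_pow {n d m : ℕ} {f : MvPolynomial (Fin n) ℂ}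
    (hd : d ≠ 0) (a : ℂ) (ℓ : Fin m → MvPolynomial (Fin n) ℂ)
    (hℓ : ∀ i, (ℓ i).IsHomogeneous 1) (hf : f = C a * ∑ i, ℓ i ^ d) :
    waringRank f d ≤ m := by
  obtain ⟨c, rfl⟩ := IsAlgClosed.exists_pow_nat_eq a (Nat.pos_of_ne_zero hd)
  refine waringRank_le (fun i => C c * ℓ i) (fun i => (hℓ i).C_mul c) ?_
  simp [hf, mul_pow, mul_sum]

theorem waringRank_le_of_eq_C_mul_prod_one_add_sub_one {n d m : ℕ}
    {f : MvPolynomial (Fin n) ℂ} (hf : f.IsHomogeneous d) (γ : ℂ)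
    (ℓ : Fin m → MvPolynomial (Fin n) ℂ) (hℓ : ∀ i, (ℓ i).IsHomogeneous 1) (hfγ : f = C γ * (∏ i, (1 + ℓ i) - 1)) :
    waringRank f d ≤ m := by
  have hcomp : ∀ k, (if k = 0 then 0 else C γ * aeval ℓ (esymm (Fin m) ℂ k)) =
      if k = d then f else 0 := by
    intro k
    rw [← homogeneousComponent_of_mem hf, hfγ, homogeneousComponent_C_mul, _root_.map_sub,
      homogeneousComponent_prod_one_add hℓ, homogeneousComponent_of_mem (isHomogeneous_one _ _)]
    split_ifs with hk
    · simp [hk, esymm_zero]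
    · simp
  rcases Nat.eq_zero_or_pos d with rfl | hd
  · have hf0 : f = 0 := by simpa using (hcomp 0).symm
    simp [hf0, waringRank_zero]
  rcases eq_or_ne γ 0 with rfl | hγ
  · simp [hfγ, waringRank_zero]
  have hesymm : ∀ k, 0 < k → k < d → aeval ℓ (esymm (Fin m) ℂ k) = 0 := fun k hk hkd => by
    simpa [hk.ne', hkd.ne, hγ] using hcomp k
  have hfd : f = C γ * aeval ℓ (esymm (Fin m) ℂ d) := by simpa [hd.ne'] using (hcomp d).symm
  have hpsum : ∑ i, ℓ i ^ d =
      C ((-1) ^ (d + 1) * (d : ℂ)) * aeval ℓ (esymm (Fin m) ℂ d) := by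
    simpa [psum] using aeval_psum_eq_of_aeval_esymm_eq_zero ℓ hd hesymm
  refine waringRank_le_of_eq_C_mul_sum_pow hd.ne' (γ * ((-1) ^ (d + 1) / d)) ℓ hℓ ?_
  rw [hpsum, hfd, ← mul_assoc, ← map_mul]
  have hd' : (d : ℂ) ≠ 0 := Nat.cast_ne_zero.mpr hd.ne'
  congr 2
  field_simp
  rw [← pow_mul, Even.neg_one_pow ⟨d + 1, by ring⟩]

/-- Newton identities: if `f ≡ γ (∏ (1 + ℓᵢ) - 1) (mod ε)` with `γ ∈ ℂ` a genuine
complex constant, then the (exact) Waring rank of `f` is at most `m`. -/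
theorem statement10 {n d m : ℕ} (f : MvPolynomial (Fin n) ℂ) (hf : f.IsHomogeneous d)
    (γ : ℂ) (ℓ : Fin m → MvPolynomial (Fin n) (LaurentSeries ℂ))
    (hhom : ∀ i, (ℓ i).IsHomogeneous 1)
    (happrox : ApproxTo
      (C (HahnSeries.C γ : LaurentSeries ℂ) * ((∏ i, (1 + ℓ i)) - 1)) f) :
    waringRank f d ≤ m := by
  obtain ⟨G, hGF, rfl⟩ := happrox.exists_lift
  have hinj : Function.Injective (map (σ := Fin n) (algebraMap ℂ⟦X⟧ ℂ⸨X⸩)) :=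
    map_injective _ (IsFractionRing.injective ℂ⟦X⟧ ℂ⸨X⸩)
  rcases eq_or_ne γ 0 with rfl | hγ
  · obtain rfl : G = 0 := hinj (by simp [hGF])
    simp [waringRank_zero]
  have hprod : ∏ i, (1 + ℓ i) ∈ Set.range (map (algebraMap ℂ⟦X⟧ ℂ⸨X⸩)) :=
    ⟨1 + C (PowerSeries.C γ⁻¹) * G, by
      rw [map_add, map_one, map_mul, map_C, hGF, ← mul_assoc, ← map_mul]
      simp [LaurentSeries.coe_algebraMap, hγ]
      ring⟩
  choose L hL using mem_range_map_of_prod_one_add_mem_range hhom hprod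
  have hG : G = C (PowerSeries.C γ) * (∏ i, (1 + L i) - 1) :=
    hinj (by simp [hGF, hL, LaurentSeries.coe_algebraMap])
  refine waringRank_le_of_eq_C_mul_prod_one_add_sub_one hf γ
    (fun i => map PowerSeries.constantCoeff (L i))
    (fun i => (IsHomogeneous.of_map (IsFractionRing.injective ℂ⟦X⟧ ℂ⸨X⸩)
      ((hL i).symm ▸ hhom i)).map _) ?_
  simp [hG]
end
end

section
/- Let f ∈ ℂ[x_1,…,x_n] be homogeneous of degree d and suppose there exist s affine linear forms ℓ_1, …, ℓ_s in x_1,…,x_n with coefficients in ℂ((ε)) and exponents e_1, …, e_s ∈ ℕ such that ∑_{i=1}^s ℓ_i^{e_i} has all coefficients in ℂ[[ε]] and is ≡ f (mod ε). Then the border Waring rank of f satisfies bWR(f) ≤ s. -/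
open MvPolynomial

noncomputable section

/-!
Since `f` is a form of degree `d`, only the degree-`d` homogeneous part of `∑ ℓᵢ ^ eᵢ` matters
modulo `ε`. Writing `ℓᵢ = aᵢ + mᵢ` with `aᵢ` constant and `mᵢ` linear, that part is
`∑ cᵢ mᵢ ^ d` with `cᵢ = (eᵢ choose d) aᵢ ^ (eᵢ - d)`. The substitution `ε ↦ ε ^ d` preserves
approximation of `f` and makes the order of every `cᵢ` divisible by `d`; as `ℂ[[ε]]` is
Henselian, each `cᵢ` then becomes a `d`-th power `rᵢ ^ d`, and `∑ (rᵢ mᵢ) ^ d` approximates `f`.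
-/

namespace PowerSeries

theorem exists_pow_eq_of_constantCoeff_ne_zero {K : Type*} [Field K] [IsAlgClosed K] {d : ℕ}
    (hd : (d : K) ≠ 0) {u : K⟦X⟧} (hu : constantCoeff u ≠ 0) : ∃ r, r ^ d = u := by
  have hd0 : 0 < d := Nat.pos_of_ne_zero (by rintro rfl; exact hd Nat.cast_zero)
  obtain ⟨z, hz⟩ := IsAlgClosed.exists_pow_nat_eq (constantCoeff u) hd0
  have hz0 : z ≠ 0 := by rintro rfl; exact hu (by rw [← hz, zero_pow hd0.ne'])
  let F : Polynomial K⟦X⟧ := Polynomial.X ^ d - Polynomial.C u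
  have hroot : F.eval (C z) ∈ Ideal.span {X} := by
    rw [Ideal.mem_span_singleton, X_dvd_iff]
    simp [F, hz]
  have hsimple : IsUnit (Ideal.Quotient.mk (Ideal.span {X}) (F.derivative.eval (C z))) := by
    refine IsUnit.map _ (isUnit_iff_constantCoeff.2 ?_)
    simp only [F, Polynomial.derivative_sub, Polynomial.derivative_C, Polynomial.derivative_X_pow,
      sub_zero, Polynomial.eval_mul, Polynomial.eval_natCast, Polynomial.eval_pow,
      Polynomial.eval_X, map_mul, map_pow, map_natCast, constantCoeff_C]
    exact (Ne.isUnit hd).mul ((Ne.isUnit hz0).pow (d - 1))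
  obtain ⟨r, hr, -⟩ := HenselianRing.is_henselian F
    (Polynomial.monic_X_pow_sub_C u hd0.ne') _ hroot hsimple
  exact ⟨r, sub_eq_zero.1 (by simpa [F] using hr)⟩

end PowerSeries

namespace LaurentSeries

theorem exists_pow_eq_of_dvd_order {K : Type*} [Field K] [IsAlgClosed K] {d : ℕ}
    (hd : (d : K) ≠ 0) {x : K⸨X⸩} (hx : (d : ℤ) ∣ x.order) : ∃ r, r ^ d = x := by
  rcases eq_or_ne x 0 with rfl | hx0
  · exact ⟨0, zero_pow (by rintro rfl; exact hd Nat.cast_zero)⟩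
  obtain ⟨w, hw⟩ := hx
  have hu : PowerSeries.constantCoeff x.powerSeriesPart ≠ 0 := by
    rw [← PowerSeries.coeff_zero_eq_constantCoeff_apply, powerSeriesPart_coeff, Nat.cast_zero,
      add_zero]
    exact mt HahnSeries.coeff_order_eq_zero.1 hx0
  obtain ⟨P, hP⟩ := PowerSeries.exists_pow_eq_of_constantCoeff_ne_zero hd hu
  refine ⟨HahnSeries.single w 1 * HahnSeries.ofPowerSeries ℤ K P, ?_⟩
  rw [mul_pow, HahnSeries.single_pow, one_pow, ← map_pow, hP, nsmul_eq_mul, ← hw]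
  exact single_order_mul_powerSeriesPart x

variable (R : Type*) [Semiring R] (d : ℕ) [NeZero d]

def expand : R⸨X⸩ →+* R⸨X⸩ :=
  HahnSeries.embDomainRingHom (AddMonoidHom.mulLeft (d : ℤ))
    (mul_right_injective₀ (Nat.cast_ne_zero.2 (NeZero.ne d)))
    (fun _ _ => mul_le_mul_iff_right₀ (by exact_mod_cast Nat.pos_of_ne_zero (NeZero.ne d)))

variable {R d}

theorem coeff_expand_mul (x : R⸨X⸩) (k : ℤ) : (expand R d x).coeff (d * k) = x.coeff k :=
  HahnSeries.embDomain_coeff (a := k)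

theorem coeff_expand_of_not_dvd (x : R⸨X⸩) {j : ℤ} (hj : ¬ (d : ℤ) ∣ j) :
    (expand R d x).coeff j = 0 :=
  HahnSeries.embDomain_of_notMem_range (by rintro ⟨k, rfl⟩; exact hj ⟨k, rfl⟩)

theorem exists_pow_eq_expand {K : Type*} [Field K] [IsAlgClosed K] (hd : (d : K) ≠ 0)
    (x : K⸨X⸩) : ∃ r, r ^ d = expand K d x := by
  refine exists_pow_eq_of_dvd_order hd ?_
  rcases eq_or_ne (expand K d x) 0 with h0 | h0
  · simp [h0]
  · by_contra hdvd
    exact mt HahnSeries.coeff_order_eq_zero.1 h0 (coeff_expand_of_not_dvd x hdvd)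

end LaurentSeries

namespace MvPolynomial

variable {σ R : Type*} [CommSemiring R]

theorem eq_C_add_homogeneousComponent_one {p : MvPolynomial σ R} (hp : p.totalDegree ≤ 1) :
    p = C (coeff 0 p) + homogeneousComponent 1 p := by
  conv_lhs => rw [← sum_homogeneousComponent p]
  rcases Nat.le_one_iff_eq_zero_or_eq_one.mp hp with h | h
  · rw [h, Finset.sum_range_one, homogeneousComponent_zero,
      homogeneousComponent_eq_zero 1 p (by omega), add_zero]
  · rw [h, Finset.sum_range_succ, Finset.sum_range_one, homogeneousComponent_zero]

theorem homogeneousComponent_C_add_pow (a : R) {m : MvPolynomial σ R} (hm : m.IsHomogeneous 1)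
    (e d : ℕ) :
    homogeneousComponent d ((C a + m) ^ e) = C ((e.choose d : R) * a ^ (e - d)) * m ^ d := by
  have hterm : ∀ k ∈ Finset.range (e + 1),
      homogeneousComponent d (m ^ k * C a ^ (e - k) * (e.choose k : MvPolynomial σ R)) =
        if d = k then C ((e.choose k : R) * a ^ (e - k)) * m ^ k else 0 := by
    intro k _
    rw [show m ^ k * C a ^ (e - k) * (e.choose k : MvPolynomial σ R) =
        C ((e.choose k : R) * a ^ (e - k)) * m ^ k by rw [C_mul, C_pow, map_natCast]; ring,
      homogeneousComponent_C_mul,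
      homogeneousComponent_of_mem (by simpa using hm.pow k), mul_ite, mul_zero]
  rw [add_comm, add_pow, map_sum, Finset.sum_congr rfl hterm, Finset.sum_ite_eq]
  split_ifs with hd
  · rfl
  · rw [Nat.choose_eq_zero_of_lt (by simpa using hd), Nat.cast_zero, zero_mul, C_0, zero_mul]

end MvPolynomial

namespace ApproxTo

variable {σ : Type*} {F : MvPolynomial σ (LaurentSeries ℂ)} {f : MvPolynomial σ ℂ}

theorem homogeneousComponent {d : ℕ} (h : ApproxTo F f) (hf : f.IsHomogeneous d) :
    ApproxTo (homogeneousComponent d F) f := by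
  refine ⟨fun m k hk => ?_, fun m => ?_⟩ <;> rw [coeff_homogeneousComponent] <;>
    split_ifs with hm
  · exact h.1 m k hk
  · rfl
  · exact h.2 m
  · exact (hf.coeff_eq_zero hm).symm

theorem map_expand (d : ℕ) [NeZero d] (h : ApproxTo F f) :
    ApproxTo (map (LaurentSeries.expand ℂ d) F) f := by
  refine ⟨fun m k hk => ?_, fun m => ?_⟩ <;> rw [coeff_map]
  · by_cases hdk : (d : ℤ) ∣ k
    · obtain ⟨j, rfl⟩ := hdk
      rw [LaurentSeries.coeff_expand_mul]
      exact h.1 m j (neg_of_mul_neg_right hk (by positivity))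
    · exact LaurentSeries.coeff_expand_of_not_dvd _ hdk
  · simpa using (LaurentSeries.coeff_expand_mul (d := d) (F.coeff m) 0).trans (h.2 m)

end ApproxTo

/-- If a homogeneous `f` of degree `d ≥ 1` is approximated by a sum of `s` powers of
affine linear forms over `ℂ((ε))`, then its border Waring rank is at most `s`. -/
theorem statement14 {n d s : ℕ} (f : MvPolynomial (Fin n) ℂ) (hf : f.IsHomogeneous d)
    (hd : 1 ≤ d)
    (ℓ : Fin s → MvPolynomial (Fin n) (LaurentSeries ℂ)) (e : Fin s → ℕ)
    (haff : ∀ i, (ℓ i).totalDegree ≤ 1)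
    (happrox : ApproxTo (∑ i, ℓ i ^ e i) f) :
    borderWaringRank f d ≤ s := by
  have : NeZero d := ⟨by omega⟩
  set m := fun i => homogeneousComponent 1 (ℓ i)
  set c : Fin s → LaurentSeries ℂ :=
    fun i => ((e i).choose d : LaurentSeries ℂ) * coeff 0 (ℓ i) ^ (e i - d)
  have hcomp : homogeneousComponent d (∑ i, ℓ i ^ e i) = ∑ i, C (c i) * m i ^ d := by
    refine (map_sum _ _ _).trans (Finset.sum_congr rfl fun i _ => ?_)
    conv_lhs => rw [eq_C_add_homogeneousComponent_one (haff i)]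
    exact homogeneousComponent_C_add_pow _ (homogeneousComponent_isHomogeneous 1 _) _ _
  choose r hr using fun i =>
    LaurentSeries.exists_pow_eq_expand (Nat.cast_ne_zero.2 (NeZero.ne d)) (c i)
  let L := fun i => C (r i) * map (LaurentSeries.expand ℂ d) (m i)
  have hL : ∀ i, (L i).IsHomogeneous 1 := fun i =>
    ((homogeneousComponent_isHomogeneous 1 _).map _).C_mul _
  have hsum : ∑ i, L i ^ d =
      map (LaurentSeries.expand ℂ d) (homogeneousComponent d (∑ i, ℓ i ^ e i)) := by
    simp only [L, hcomp, map_sum, mul_pow, ← C_pow, hr, map_mul, map_C, map_pow]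
  refine Nat.sInf_le ⟨L, hL, ?_⟩
  rw [hsum]
  exact (happrox.homogeneousComponent hf).map_expand d
end
end

section
/- Let d, r, s ≥ 1 and let f be a homogeneous polynomial of degree d in the variables x_{ji} (1 ≤ j ≤ d, 1 ≤ i ≤ r) and y_1, …, y_s over ℂ. Suppose f is invariant under all of the following variable substitutions: (a) for every i ∈ {1,…,r} and every tuple λ_1,…,λ_d ∈ ℂ^× with λ_1⋯λ_d = 1, the map x_{ji} ↦ λ_j x_{ji} (fixing all other variables); (b) for every i ∈ {1,…,r} and every permutation σ of {1,…,d}, the map x_{ji} ↦ x_{σ(j)i}; (c) for every permutation τ of {1,…,r}, the map x_{ji} ↦ x_{jτ(i)}; (d) for every i ∈ {1,…,s} and every d-th root of unity ω, the map y_i ↦ ω y_i; (e) for every permutation π of {1,…,s}, the map y_i ↦ y_{π(i)}. Then f = α ∑_{i=1}^r ∏_{j=1}^d x_{ji} + β ∑_{i=1}^s y_i^d for some α, β ∈ ℂ. -/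
/-!
The substitutions (a) and (d) are diagonal, so each multiplies the coefficient of a monomial
`v^m` of `f` by the character value `∏ c_v ^ m_v`; invariance forces, for every monomial of `f`,
equal exponents within each block `x_{1i}, …, x_{di}` (test `λ = 2` at one place and `2⁻¹` at
another) and `y`-exponents divisible by `d` (test a primitive `d`-th root of unity).
A nonzero exponent then dominates a whole block `∏_j x_{ji}` or a power `y_t^d`, both of
degree `d`, so by homogeneity the monomial is that one. The permutations (c) and (e) make the
coefficients constant along these two families.
-/

open MvPolynomial Finset

noncomputable section

theorem Finsupp.eq_of_le_of_degree_le {σ : Type*} {m n : σ →₀ ℕ} (hle : n ≤ m)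
    (hdeg : m.degree ≤ n.degree) : n = m := by
  obtain ⟨k, rfl⟩ := le_iff_exists_add.mp hle
  rw [map_add] at hdeg
  rw [(Finsupp.degree_eq_zero_iff k).mp (by omega), add_zero]

theorem exists_forall_eq_of_forall_eq {ι α : Type*} [Nonempty α] {g : ι → α}
    (h : ∀ i i', g i = g i') : ∃ a, ∀ i, g i = a := by
  rcases isEmpty_or_nonempty ι with _ | ⟨⟨i₀⟩⟩
  · exact ⟨Classical.arbitrary α, isEmptyElim⟩
  · exact ⟨g i₀, fun i => h i i₀⟩

theorem MvPolynomial.eq_sum_monomial_of_support_subset_range {R σ ι : Type*} [CommSemiring R]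
    [Fintype ι] {g : ι → σ →₀ ℕ} (hg : Function.Injective g) {p : MvPolynomial σ R}
    (hp : (p.support : Set (σ →₀ ℕ)) ⊆ Set.range g) :
    p = ∑ i, monomial (g i) (coeff (g i) p) := by
  classical
  calc p = ∑ m ∈ p.support, monomial m (coeff m p) := p.as_sum
    _ = ∑ m ∈ univ.image g, monomial m (coeff m p) := by
      refine sum_subset (fun m hm => ?_) (fun m _ hm => ?_)
      · obtain ⟨i, rfl⟩ := hp hm
        exact mem_image_of_mem g (mem_univ i)
      · rw [notMem_support_iff.mp hm, map_zero]
    _ = ∑ i, monomial (g i) (coeff (g i) p) := sum_image hg.injOn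

section Diagonal

variable {σ : Type*}

theorem coeff_aeval_C_mul_X {R : Type*} [CommSemiring R] (c : σ → R) (p : MvPolynomial σ R)
    (m : σ →₀ ℕ) :
    coeff m (aeval (fun v => C (c v) * X v) p) = (m.prod fun v e => c v ^ e) * coeff m p := by
  classical
  induction p using MvPolynomial.induction_on' with
  | add p q hp hq => rw [map_add, coeff_add, coeff_add, hp, hq, mul_add]
  | monomial u a =>
    have hmono : aeval (fun v => C (c v) * X v) (monomial u a) =
        monomial u ((u.prod fun v e => c v ^ e) * a) := by
      rw [aeval_monomial, monomial_eq, algebraMap_eq, map_mul]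
      simp only [mul_pow, Finsupp.prod_mul, ← map_pow]
      rw [← map_finsuppProd C]
      ring
    rw [hmono, coeff_monomial, coeff_monomial]
    split_ifs with h
    · rw [h]
    · rw [mul_zero]

theorem prod_pow_eq_one_of_aeval_C_mul_X_eq {K : Type*} [CommRing K] [IsDomain K] {c : σ → K}
    {p : MvPolynomial σ K} (h : aeval (fun v => C (c v) * X v) p = p) {m : σ →₀ ℕ}
    (hm : coeff m p ≠ 0) : (m.prod fun v e => c v ^ e) = 1 :=
  mul_right_cancel₀ hm (by rw [← coeff_aeval_C_mul_X, h, one_mul])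

end Diagonal

theorem eq_of_forall_prod_pow_eq_one {K J : Type*} [Field K] [CharZero K] [Fintype J]
    [DecidableEq J] {e : J → ℕ}
    (h : ∀ lam : J → K, (∀ j, lam j ≠ 0) → ∏ j, lam j = 1 → ∏ j, lam j ^ e j = 1)
    (j₁ j₂ : J) : e j₁ = e j₂ := by
  obtain rfl | hne := eq_or_ne j₁ j₂
  · rfl
  let lam : J → K := Pi.mulSingle j₁ 2 * Pi.mulSingle j₂ 2⁻¹
  have hlam : ∀ j, j ≠ j₁ ∧ j ≠ j₂ → lam j = 1 := fun j hj => by simp [lam, hj.1, hj.2]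
  have key := h lam (fun j => by simp [lam, Pi.mulSingle_apply]; split_ifs <;> norm_num)
    (by rw [Fintype.prod_eq_mul j₁ j₂ hne hlam]; simp [lam, hne, hne.symm])
  rw [Fintype.prod_eq_mul j₁ j₂ hne (fun j hj => by rw [hlam j hj, one_pow])] at key
  simp only [lam, Pi.mul_apply, Pi.mulSingle_eq_same, Pi.mulSingle_eq_of_ne hne,
    Pi.mulSingle_eq_of_ne hne.symm, mul_one, one_mul, inv_pow] at key
  exact Nat.pow_right_injective le_rfl (by exact_mod_cast mul_inv_eq_one₀ (by simp) |>.mp key)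

section ProductPlusPowers

variable {ι κ : Type*}

def blockExponent (d : ℕ) (i : ι) : (Fin d × ι) ⊕ κ →₀ ℕ :=
  ∑ j : Fin d, Finsupp.single (Sum.inl (j, i)) 1

def powerExponent (d : ℕ) (t : κ) : (Fin d × ι) ⊕ κ →₀ ℕ :=
  Finsupp.single (Sum.inr t) d

variable {d : ℕ}

theorem blockExponent_apply_inl [DecidableEq ι] (i i' : ι) (j : Fin d) :
    blockExponent (κ := κ) d i (Sum.inl (j, i')) = if i' = i then 1 else 0 := by
  classical
  rw [blockExponent, Finsupp.finsetSum_apply]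
  by_cases h : i' = i <;> simp [h, Finsupp.single_apply]

theorem blockExponent_apply_inr (i : ι) (t : κ) :
    blockExponent (κ := κ) d i (Sum.inr t) = 0 := by
  simp [blockExponent, Finsupp.finsetSum_apply]

theorem degree_blockExponent (i : ι) : (blockExponent (κ := κ) d i).degree = d := by
  simp [blockExponent]

theorem monomial_blockExponent {R : Type*} [CommSemiring R] (i : ι) :
    monomial (blockExponent d i) (1 : R) =
      ∏ j : Fin d, X (Sum.inl (j, i) : (Fin d × ι) ⊕ κ) := by
  rw [blockExponent, monomial_sum_one]
  rfl

theorem monomial_powerExponent {R : Type*} [CommSemiring R] (t : κ) :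
    monomial (powerExponent d t) (1 : R) = X (Sum.inr t : (Fin d × ι) ⊕ κ) ^ d :=
  X_pow_eq_monomial.symm

theorem mapDomain_blockExponent (τ : ι → ι) (i : ι) :
    Finsupp.mapDomain (Sum.map (fun p : Fin d × ι => (p.1, τ p.2)) (id : κ → κ))
      (blockExponent d i) = blockExponent d (τ i) := by
  simp [blockExponent, Finsupp.mapDomain_finsetSum, Finsupp.mapDomain_single]

theorem mapDomain_powerExponent (π : κ → κ) (t : κ) :
    Finsupp.mapDomain (Sum.map (id : Fin d × ι → Fin d × ι) π)
      (powerExponent d t) = powerExponent d (π t) := by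
  simp [powerExponent, Finsupp.mapDomain_single]

theorem injective_sumElim_blockExponent_powerExponent (hd : 1 ≤ d) :
    Function.Injective (Sum.elim (blockExponent (κ := κ) d) (powerExponent (ι := ι) d)) := by
  classical
  let j₀ : Fin d := ⟨0, hd⟩
  refine Function.Injective.sumElim (fun i i' h => ?_) (fun t t' h => ?_) (fun i t h => ?_)
  · have := DFunLike.congr_fun h (Sum.inl (j₀, i))
    simp only [blockExponent_apply_inl, if_true] at this
    split_ifs at this with hi
    exact hi
  · simpa [powerExponent, Finsupp.single_left_inj (by omega : d ≠ 0)] using h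
  · have := DFunLike.congr_fun h (Sum.inr t)
    simp [blockExponent_apply_inr, powerExponent] at this
    omega

theorem mem_range_sumElim_blockExponent_powerExponent (hd : 1 ≤ d) {m : (Fin d × ι) ⊕ κ →₀ ℕ}
    (hdeg : m.degree = d)
    (hblock : ∀ i j j', m (Sum.inl (j, i)) = m (Sum.inl (j', i)))
    (hdvd : ∀ t, d ∣ m (Sum.inr t)) :
    m ∈ Set.range (Sum.elim (blockExponent d) (powerExponent d)) := by
  classical
  obtain ⟨v, hv⟩ : ∃ v, m v ≠ 0 := by
    by_contra! h
    rw [show m = 0 from Finsupp.ext h, map_zero] at hdeg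
    omega
  rcases v with ⟨j, i⟩ | t
  · refine ⟨Sum.inl i, Finsupp.eq_of_le_of_degree_le ?_
      (by rw [hdeg, Sum.elim_inl, degree_blockExponent])⟩
    rintro (⟨j', i'⟩ | t)
    · rw [Sum.elim_inl, blockExponent_apply_inl]
      split_ifs with h
      · subst h; rw [hblock i' j' j]; omega
      · exact Nat.zero_le _
    · simp [blockExponent_apply_inr]
  · refine ⟨Sum.inr t, Finsupp.eq_of_le_of_degree_le ?_ (by simp [hdeg, powerExponent])⟩
    rw [Sum.elim_inr, powerExponent, Finsupp.single_le_iff]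
    exact Nat.le_of_dvd (Nat.pos_of_ne_zero hv) (hdvd t)

def blockScaling {R : Type*} [CommSemiring R] [DecidableEq ι] (i : ι) (lam : Fin d → R) :
    (Fin d × ι) ⊕ κ → MvPolynomial ((Fin d × ι) ⊕ κ) R :=
  Sum.elim
    (fun p => if p.2 = i then C (lam p.1) * X (Sum.inl p) else X (Sum.inl p))
    (fun t => X (Sum.inr t))

def rootScaling {R : Type*} [CommSemiring R] [DecidableEq κ] (t : κ) (ω : R) :
    (Fin d × ι) ⊕ κ → MvPolynomial ((Fin d × ι) ⊕ κ) R :=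
  Sum.elim
    (fun p => X (Sum.inl p))
    (fun t' => if t' = t then C ω * X (Sum.inr t') else X (Sum.inr t'))

theorem apply_inl_eq_of_aeval_blockScaling_eq {K : Type*} [Field K] [CharZero K] [Fintype ι]
    [Fintype κ] [DecidableEq ι] {f : MvPolynomial ((Fin d × ι) ⊕ κ) K} {i : ι}
    (h : ∀ lam : Fin d → K, (∀ j, lam j ≠ 0) → ∏ j, lam j = 1 →
      aeval (blockScaling i lam) f = f)
    {m : (Fin d × ι) ⊕ κ →₀ ℕ} (hm : coeff m f ≠ 0) (j₁ j₂ : Fin d) :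
    m (Sum.inl (j₁, i)) = m (Sum.inl (j₂, i)) := by
  refine eq_of_forall_prod_pow_eq_one (K := K) (e := fun j => m (Sum.inl (j, i)))
    (fun lam hne hprod => ?_) j₁ j₂
  let c : (Fin d × ι) ⊕ κ → K := Sum.elim (fun p => if p.2 = i then lam p.1 else 1) 1
  have hc : blockScaling i lam = fun v => C (c v) * X v := by
    funext v
    rcases v with ⟨j, i'⟩ | t
    · by_cases hi : i' = i <;> simp [blockScaling, c, hi]
    · simp [blockScaling, c]
  have := prod_pow_eq_one_of_aeval_C_mul_X_eq (hc ▸ h lam hne hprod) hm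
  simpa [c, Finsupp.prod_fintype, Fintype.prod_sum_type, Fintype.prod_prod_type, ite_pow]
    using this

theorem dvd_apply_inr_of_aeval_rootScaling_eq {K : Type*} [CommRing K] [IsDomain K] [Fintype ι]
    [Fintype κ] [DecidableEq κ] {f : MvPolynomial ((Fin d × ι) ⊕ κ) K} {t : κ} {ζ : K}
    (hζ : IsPrimitiveRoot ζ d) (h : aeval (rootScaling t ζ) f = f)
    {m : (Fin d × ι) ⊕ κ →₀ ℕ} (hm : coeff m f ≠ 0) : d ∣ m (Sum.inr t) := by
  let c : (Fin d × ι) ⊕ κ → K := Sum.elim 1 (fun t' => if t' = t then ζ else 1)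
  have hc : rootScaling t ζ = fun v => C (c v) * X v := by
    funext v
    rcases v with p | t'
    · simp [rootScaling, c]
    · by_cases ht : t' = t <;> simp [rootScaling, c, ht]
  have := prod_pow_eq_one_of_aeval_C_mul_X_eq (hc ▸ h) hm
  refine (hζ.pow_eq_one_iff_dvd _).mp ?_
  simpa [c, Finsupp.prod_fintype, Fintype.prod_sum_type, ite_pow] using this

theorem coeff_blockExponent_eq_of_rename_eq {R : Type*} [CommSemiring R]
    {f : MvPolynomial ((Fin d × ι) ⊕ κ) R} [DecidableEq ι]
    (hc : ∀ τ : Equiv.Perm ι,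
      rename (Sum.map (fun p : Fin d × ι => (p.1, τ p.2)) (id : κ → κ)) f = f) (i i' : ι) :
    coeff (blockExponent d i) f = coeff (blockExponent d i') f := by
  have := coeff_rename_mapDomain
    (Sum.map (fun p : Fin d × ι => (p.1, Equiv.swap i' i p.2)) id)
    ((Function.injective_id.prodMap (Equiv.swap i' i).injective).sumMap Function.injective_id)
    f (blockExponent d i')
  rwa [hc, mapDomain_blockExponent, Equiv.swap_apply_left] at this

theorem coeff_powerExponent_eq_of_rename_eq {R : Type*} [CommSemiring R]
    {f : MvPolynomial ((Fin d × ι) ⊕ κ) R} [DecidableEq κ]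
    (he : ∀ π : Equiv.Perm κ,
      rename (Sum.map (id : Fin d × ι → Fin d × ι) (fun t => π t)) f = f) (t t' : κ) :
    coeff (powerExponent d t) f = coeff (powerExponent d t') f := by
  have := coeff_rename_mapDomain (Sum.map id (fun x => Equiv.swap t' t x))
    (Function.injective_id.sumMap (Equiv.swap t' t).injective) f (powerExponent d t')
  rwa [he, mapDomain_powerExponent, Equiv.swap_apply_left] at this

end ProductPlusPowers

theorem statement19_general {d r s : ℕ} (hd : 1 ≤ d)
    (f : MvPolynomial ((Fin d × Fin r) ⊕ Fin s) ℂ) (hf : f.IsHomogeneous d)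
    -- (a) rescaling the variables `x_{1i}, …, x_{di}` of one block by scalars of product 1
    (ha : ∀ (i : Fin r) (lam : Fin d → ℂ), (∀ j, lam j ≠ 0) → (∏ j, lam j) = 1 →
      aeval (Sum.elim
        (fun p : Fin d × Fin r =>
          if p.2 = i then C (lam p.1) * X (Sum.inl p : (Fin d × Fin r) ⊕ Fin s)
          else X (Sum.inl p : (Fin d × Fin r) ⊕ Fin s))
        (fun t : Fin s => X (Sum.inr t : (Fin d × Fin r) ⊕ Fin s))) f = f)
    -- (c) permuting the blocks of `x`-variables
    (hc : ∀ τ : Equiv.Perm (Fin r),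
      rename (Sum.map
        (fun p : Fin d × Fin r => (p.1, τ p.2))
        (id : Fin s → Fin s)) f = f)
    -- (d) rescaling one `y`-variable by a `d`-th root of unity
    (hd' : ∀ (i : Fin s) (ω : ℂ), ω ^ d = 1 →
      aeval (Sum.elim
        (fun p : Fin d × Fin r => X (Sum.inl p : (Fin d × Fin r) ⊕ Fin s))
        (fun t : Fin s =>
          if t = i then C ω * X (Sum.inr t : (Fin d × Fin r) ⊕ Fin s)
          else X (Sum.inr t : (Fin d × Fin r) ⊕ Fin s))) f = f)
    -- (e) permuting the `y`-variables
    (he : ∀ π : Equiv.Perm (Fin s),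
      rename (Sum.map (id : Fin d × Fin r → Fin d × Fin r) (fun t => π t)) f = f) :
    ∃ α β : ℂ,
      f = C α * (∑ i : Fin r, ∏ j : Fin d, X (Sum.inl (j, i) : (Fin d × Fin r) ⊕ Fin s))
        + C β * (∑ i : Fin s, X (Sum.inr i : (Fin d × Fin r) ⊕ Fin s) ^ d) := by
  have hζ := Complex.isPrimitiveRoot_exp d (by omega)
  have hsupp :
      ∀ m ∈ f.support, m ∈ Set.range (Sum.elim (blockExponent d) (powerExponent d)) := by
    intro m hm
    replace hm := mem_support_iff.mp hm
    refine mem_range_sumElim_blockExponent_powerExponent hd ?_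
      (fun i => apply_inl_eq_of_aeval_blockScaling_eq (ha i) hm)
      (fun t => dvd_apply_inr_of_aeval_rootScaling_eq hζ (hd' t _ hζ.pow_eq_one) hm)
    by_contra h
    exact hm (hf.coeff_eq_zero h)
  obtain ⟨α, hα⟩ := exists_forall_eq_of_forall_eq (coeff_blockExponent_eq_of_rename_eq hc)
  obtain ⟨β, hβ⟩ := exists_forall_eq_of_forall_eq (coeff_powerExponent_eq_of_rename_eq he)
  refine ⟨α, β, ?_⟩
  conv_lhs => rw [eq_sum_monomial_of_support_subset_range
    (injective_sumElim_blockExponent_powerExponent hd) hsupp]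
  simp only [Fintype.sum_sum_type, Sum.elim_inl, Sum.elim_inr, hα, hβ, ← monomial_blockExponent,
    ← monomial_powerExponent, mul_sum, C_mul_monomial, mul_one]

/-- Polynomials stabilized by the symmetries of the product-plus-powers polynomial
`P^[d]_{r,s} = ∑_{i=1}^r ∏_{j=1}^d x_{ji} + ∑_{i=1}^s y_i^d` must be of the form
`α ∑_i ∏_j x_{ji} + β ∑_i y_i^d`.  The variables `x_{ji}` are indexed by
`Sum.inl (j, i)` and the variables `y_i` by `Sum.inr i`. -/
theorem statement19 {d r s : ℕ} (hd : 1 ≤ d) (hr : 1 ≤ r) (hs : 1 ≤ s)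
    (f : MvPolynomial ((Fin d × Fin r) ⊕ Fin s) ℂ) (hf : f.IsHomogeneous d)
    -- (a) rescaling the variables `x_{1i}, …, x_{di}` of one block by scalars of product 1
    (ha : ∀ (i : Fin r) (lam : Fin d → ℂ), (∀ j, lam j ≠ 0) → (∏ j, lam j) = 1 →
      aeval (Sum.elim
        (fun p : Fin d × Fin r =>
          if p.2 = i then C (lam p.1) * X (Sum.inl p : (Fin d × Fin r) ⊕ Fin s)
          else X (Sum.inl p : (Fin d × Fin r) ⊕ Fin s))
        (fun t : Fin s => X (Sum.inr t : (Fin d × Fin r) ⊕ Fin s))) f = f)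
    -- (b) permuting the variables `x_{1i}, …, x_{di}` inside one block
    (hb : ∀ (i : Fin r) (σ : Equiv.Perm (Fin d)),
      rename (Sum.map
        (fun p : Fin d × Fin r => if p.2 = i then (σ p.1, p.2) else p)
        (id : Fin s → Fin s)) f = f)
    -- (c) permuting the blocks of `x`-variables
    (hc : ∀ τ : Equiv.Perm (Fin r),
      rename (Sum.map
        (fun p : Fin d × Fin r => (p.1, τ p.2))
        (id : Fin s → Fin s)) f = f)
    -- (d) rescaling one `y`-variable by a `d`-th root of unity
    (hd' : ∀ (i : Fin s) (ω : ℂ), ω ^ d = 1 →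
      aeval (Sum.elim
        (fun p : Fin d × Fin r => X (Sum.inl p : (Fin d × Fin r) ⊕ Fin s))
        (fun t : Fin s =>
          if t = i then C ω * X (Sum.inr t : (Fin d × Fin r) ⊕ Fin s)
          else X (Sum.inr t : (Fin d × Fin r) ⊕ Fin s))) f = f)
    -- (e) permuting the `y`-variables
    (he : ∀ π : Equiv.Perm (Fin s),
      rename (Sum.map (id : Fin d × Fin r → Fin d × Fin r) (fun t => π t)) f = f) :
    ∃ α β : ℂ,
      f = C α * (∑ i : Fin r, ∏ j : Fin d, X (Sum.inl (j, i) : (Fin d × Fin r) ⊕ Fin s))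
        + C β * (∑ i : Fin s, X (Sum.inr i : (Fin d × Fin r) ⊕ Fin s) ^ d) :=
  statement19_general hd f hf ha hc hd' he
end
end
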